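/- arXiv:2505.08317 — 6 statements merged into one kernel-verified Lean document; each statement's English description precedes it below -/
import Mathlib

section
/- For every θ > 0: (i) (0, x̂_ε(θ)] ∩ B_ε(θ) = ∅, i.e. for every β ∈ (0, x̂_ε(θ)] there exists x ∈ (0,β] with φ_β(x,θ) < −c(x); (ii) x̲̂_ε(θ) ∈ B_ε(θ), i.e. φ_{x̲̂_ε(θ)}(x,θ) ≥ −c(x) for all x ∈ (0, x̲̂_ε(θ)]; (iii) consequently x̂_ε(θ) ≤ β_ε(θ) ≤ x̲̂_ε(θ). -/
open Set Filter Topology MeasureTheory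

noncomputable section

/-- `ℓ^ε(x,θ) = −b(x)c(x) + π(x,θ) − ½σ(x)²(ε c(x)² + c'(x))`. -/
def ell (ε : ℝ) (b σ c : ℝ → ℝ) (π : ℝ → ℝ → ℝ) (x θ : ℝ) : ℝ :=
  -(b x) * c x + π x θ - (1 / 2) * (σ x) ^ 2 * (ε * (c x) ^ 2 + deriv c x)

/-- `ℓ̲^ε(x) = −b(x)c(x) + κ(x) − ½σ(x)²(ε c(x)² + c'(x))`. -/
def ellKappa (ε : ℝ) (b σ c κ : ℝ → ℝ) (x : ℝ) : ℝ :=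
  -(b x) * c x + κ x - (1 / 2) * (σ x) ^ 2 * (ε * (c x) ^ 2 + deriv c x)

/-- `φ` is a C¹ solution of the auxiliary boundary value problem with boundary point `β`,
mean-field parameter `θ` and perturbation `γ`. -/
def IsAuxSol (ε : ℝ) (b σ c : ℝ → ℝ) (π : ℝ → ℝ → ℝ) (β θ γ : ℝ) (φ : ℝ → ℝ) : Prop :=
  ContDiffOn ℝ 1 φ (Ioi 0) ∧
    (∀ x ∈ Ioo (0 : ℝ) β,
      (1 / 2) * (σ x) ^ 2 * deriv φ x + b x * φ x - (ε / 2) * (σ x) ^ 2 * (φ x) ^ 2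
        = ell ε b σ c π β θ - π x θ + γ) ∧
    (∀ x : ℝ, β ≤ x → φ x = -(c x))

/-- `φ` is a C¹ solution of the limiting (robust) auxiliary boundary value problem. -/
def IsAuxSolKappa (ε : ℝ) (b σ c κ : ℝ → ℝ) (β : ℝ) (φ : ℝ → ℝ) : Prop :=
  ContDiffOn ℝ 1 φ (Ioi 0) ∧
    (∀ x ∈ Ioo (0 : ℝ) β,
      (1 / 2) * (σ x) ^ 2 * deriv φ x + b x * φ x - (ε / 2) * (σ x) ^ 2 * (φ x) ^ 2
        = ellKappa ε b σ c κ β - κ x) ∧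
    (∀ x : ℝ, β ≤ x → φ x = -(c x))

/-- The standing assumptions of the paper (Assumptions 2.1, 2.2, 2.4 and 3.1). -/
structure Setting where
  ε : ℝ
  b : ℝ → ℝ
  σ : ℝ → ℝ
  c : ℝ → ℝ
  π : ℝ → ℝ → ℝ
  xhat : ℝ → ℝ
  ell0 : ℝ → ℝ
  hε : 0 < ε
  hb : ContDiffOn ℝ 1 b (Ioi 0)
  hσ : ContDiffOn ℝ 1 σ (Ioi 0)
  hσpos : ∀ x : ℝ, 0 < x → 0 < σ x
  hgrowth : ∃ C > (0 : ℝ), ∃ ζ > (0 : ℝ), ∀ x : ℝ, 0 < x → |b x| + |σ x| ≤ C * (1 + x ^ ζ)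
  hc : ContDiffOn ℝ 1 c (Ioi 0)
  hcanti : AntitoneOn c (Ioi 0)
  clow : ℝ
  chigh : ℝ
  hclow : 0 < clow
  hcle : clow ≤ chigh
  hcbd : ∀ x : ℝ, 0 < x → c x ∈ Icc clow chigh
  hπC2 : ∀ θ : ℝ, 0 < θ → ContDiffOn ℝ 2 (fun x => π x θ) (Ioi 0)
  hπpos : ∀ x θ : ℝ, 0 < x → 0 < θ → 0 < π x θ
  hπmono : ∀ θ : ℝ, 0 < θ → MonotoneOn (fun x => π x θ) (Ioi 0)
  hπconc : ∀ θ : ℝ, 0 < θ → ConcaveOn ℝ (Ioi 0) (fun x => π x θ)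
  hπxθcont : ContinuousOn
    (fun p : ℝ × ℝ => deriv (fun θ' => deriv (fun x' => π x' θ') p.1) p.2) (Ioi 0 ×ˢ Ioi 0)
  hπxθneg : ∀ x θ : ℝ, 0 < x → 0 < θ →
    deriv (fun θ' => deriv (fun x' => π x' θ') x) θ < 0
  hxhatpos : ∀ θ : ℝ, 0 < θ → 0 < xhat θ
  hellincr : ∀ θ : ℝ, 0 < θ → ∀ x : ℝ, 0 < x → x < xhat θ →
    0 < deriv (fun y => ell ε b σ c π y θ) x
  hellcrit : ∀ θ : ℝ, 0 < θ → deriv (fun y => ell ε b σ c π y θ) (xhat θ) = 0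
  helldecr : ∀ θ : ℝ, 0 < θ → ∀ x : ℝ, xhat θ < x →
    deriv (fun y => ell ε b σ c π y θ) x < 0
  hellbot : ∀ θ : ℝ, 0 < θ → Tendsto (fun x => ell ε b σ c π x θ) atTop atBot
  helllim0 : ∀ θ : ℝ, 0 < θ →
    Tendsto (fun x => ell ε b σ c π x θ) (nhdsWithin 0 (Ioi 0)) (nhds (ell0 θ))
  hxunder : ∀ θ : ℝ, 0 < θ → ∃ x : ℝ, xhat θ ≤ x ∧ ell ε b σ c π x θ = ell0 θ

namespace Setting

/-- `ℓ^ε` associated with the data of the setting. -/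
def ellS (S : Setting) (x θ : ℝ) : ℝ := ell S.ε S.b S.σ S.c S.π x θ

/-- `x̲̂_ε(θ) = inf {x ≥ x̂_ε(θ) : ℓ^ε(x,θ) = ℓ^ε(0⁺,θ)}`. -/
def xunder (S : Setting) (θ : ℝ) : ℝ :=
  sInf {x : ℝ | S.xhat θ ≤ x ∧ S.ellS x θ = S.ell0 θ}

/-- `B_ε(θ) = {β > 0 : φ_β(x,θ) ≥ −c(x) for all x ∈ (0,β]}`. -/
def Bset (S : Setting) (φ : ℝ → ℝ → ℝ → ℝ) (θ : ℝ) : Set ℝ :=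
  {β : ℝ | 0 < β ∧ ∀ x : ℝ, 0 < x → x ≤ β → -(S.c x) ≤ φ β θ x}

/-- `β_ε(θ) = inf B_ε(θ)`. -/
def betaE (S : Setting) (φ : ℝ → ℝ → ℝ → ℝ) (θ : ℝ) : ℝ := sInf (S.Bset φ θ)

/-- `V_x^ε(x,θ)`: equal to `φ_{β_ε(θ)}(x,θ)` below the free boundary, `−c(x)` above it. -/
def Vx (S : Setting) (φ : ℝ → ℝ → ℝ → ℝ) (x θ : ℝ) : ℝ :=
  if x < S.betaE φ θ then φ (S.betaE φ θ) θ x else -(S.c x)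

/-- The candidate potential `V^ε(x,θ)`, normalized by `V^ε(β_ε(θ),θ) = 0`. -/
def V (S : Setting) (φ : ℝ → ℝ → ℝ → ℝ) (x θ : ℝ) : ℝ :=
  if x < S.betaE φ θ then -(∫ y in x..S.betaE φ θ, φ (S.betaE φ θ) θ y)
  else -(∫ y in S.betaE φ θ..x, S.c y)

/-- The scale density `S'(y) = exp(−∫_{x₀}^y 2b/σ² )` of the uncontrolled diffusion. -/
def scaleD (S : Setting) (x₀ y : ℝ) : ℝ :=
  Real.exp (-(∫ z in x₀..y, 2 * S.b z / (S.σ z) ^ 2))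

/-- `(W,λ)` is a classical solution of the variational inequality (free-boundary problem). -/
def IsVISol (S : Setting) (θ lam : ℝ) (W : ℝ → ℝ) : Prop :=
  ContDiffOn ℝ 2 W (Ioi 0) ∧
    ∀ x : ℝ, 0 < x →
      max ((1 / 2) * (S.σ x) ^ 2 * deriv (deriv W) x + S.b x * deriv W x
            - (S.ε / 2) * (S.σ x) ^ 2 * (deriv W x) ^ 2 + S.π x θ - lam)
        (-(deriv W x) - S.c x) = 0

/-- The unnormalized stationary density. -/
def densRaw (S : Setting) (φ : ℝ → ℝ → ℝ → ℝ) (θ x : ℝ) : ℝ :=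
  (2 / (S.σ x) ^ 2) *
    Real.exp (-(∫ y in x..S.betaE φ θ, 2 * S.b y / (S.σ y) ^ 2)
      + 2 * S.ε * ∫ y in x..S.betaE φ θ, S.Vx φ y θ)

/-- The normalizing constant `Z(θ)`. -/
def Znorm (S : Setting) (φ : ℝ → ℝ → ℝ → ℝ) (θ : ℝ) : ℝ :=
  ∫ x in Ioc (0 : ℝ) (S.betaE φ θ), S.densRaw φ θ x

/-- The stationary probability measure `ν^{θ,ε}` with density `m^{θ,ε}`. -/
def nu (S : Setting) (φ : ℝ → ℝ → ℝ → ℝ) (θ : ℝ) : Measure ℝ :=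
  volume.withDensity fun x =>
    ENNReal.ofReal ((Ioc (0 : ℝ) (S.betaE φ θ)).indicator
      (fun y => S.densRaw φ θ y / S.Znorm φ θ) x)

end Setting


private lemma gron_pos (ψ : ℝ → ℝ) (x₁ x₂ K : ℝ) (hlt : x₁ < x₂)
    (hcont : ContinuousOn ψ (Icc x₁ x₂)) (hend : ψ x₂ = 0)
    (hnonneg : ∀ x ∈ Icc x₁ x₂, 0 ≤ ψ x)
    (hder : ∀ x ∈ Ioo x₁ x₂, ∃ d, HasDerivAt ψ d x ∧ 0 < d + K * ψ x) : False := by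
  set h : ℝ → ℝ := fun x => ψ x * Real.exp (K * x) with hh
  have hhc : ContinuousOn h (Icc x₁ x₂) :=
    hcont.mul ((Real.continuous_exp.comp (continuous_const.mul continuous_id)).continuousOn)
  have hmono : StrictMonoOn h (Icc x₁ x₂) := by
    apply strictMonoOn_of_deriv_pos (convex_Icc _ _) hhc
    intro x hx
    rw [interior_Icc] at hx
    obtain ⟨d, hd, hpos⟩ := hder x hx
    have hE : HasDerivAt (fun y : ℝ => Real.exp (K * y)) (K * Real.exp (K * x)) x := by
      have := (Real.hasDerivAt_exp (K * x)).comp x ((hasDerivAt_id x).const_mul K)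
      simpa [mul_comm, Function.comp_def] using this
    have hD : HasDerivAt h (d * Real.exp (K * x) + ψ x * (K * Real.exp (K * x))) x := hd.mul hE
    rw [hD.deriv]
    have hexp := Real.exp_pos (K * x)
    nlinarith
  have h1 : h x₁ < h x₂ := hmono (left_mem_Icc.2 hlt.le) (right_mem_Icc.2 hlt.le) hlt
  have h2 : h x₂ = 0 := by simp [hh, hend]
  have h3 : 0 ≤ h x₁ := mul_nonneg (hnonneg x₁ (left_mem_Icc.2 hlt.le)) (Real.exp_pos _).le
  linarith

private lemma gron_neg (ψ : ℝ → ℝ) (x₁ x₂ K : ℝ) (hlt : x₁ < x₂)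
    (hcont : ContinuousOn ψ (Icc x₁ x₂)) (hend : ψ x₂ = 0) (hneg : ψ x₁ < 0)
    (hder : ∀ x ∈ Ioo x₁ x₂, ∃ d, HasDerivAt ψ d x ∧ (ψ x ≤ 0 → d + K * ψ x ≤ 0)) : False := by
  set Z : Set ℝ := Icc x₁ x₂ ∩ ψ ⁻¹' {0} with hZ
  have hZne : Z.Nonempty := ⟨x₂, right_mem_Icc.2 hlt.le, by simpa using hend⟩
  have hZbdd : BddBelow Z := ⟨x₁, fun z hz => hz.1.1⟩
  have hZclosed : IsClosed Z :=
    hcont.preimage_isClosed_of_isClosed isClosed_Icc isClosed_singleton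
  set m := sInf Z with hm
  have hmZ : m ∈ Z := hZclosed.csInf_mem hZne hZbdd
  have hmIcc : m ∈ Icc x₁ x₂ := hmZ.1
  have hψm : ψ m = 0 := hmZ.2
  have hx₁m : x₁ < m := by
    rcases lt_or_eq_of_le hmIcc.1 with h | h
    · exact h
    · exfalso; rw [← h] at hψm; linarith
  -- ψ ≤ 0 on Icc x₁ m
  have hψle : ∀ y ∈ Icc x₁ m, ψ y ≤ 0 := by
    intro y hy
    by_contra hpos
    push_neg at hpos
    have hyIcc : Icc x₁ y ⊆ Icc x₁ x₂ := Icc_subset_Icc le_rfl (hy.2.trans hmIcc.2)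
    have := intermediate_value_Icc hy.1 (hcont.mono hyIcc)
    have h0 : (0 : ℝ) ∈ Icc (ψ x₁) (ψ y) := ⟨hneg.le, hpos.le⟩
    obtain ⟨z, hz, hz0⟩ := this h0
    have hzZ : z ∈ Z := ⟨⟨hz.1, hz.2.trans (hy.2.trans hmIcc.2)⟩, by simpa using hz0⟩
    have : m ≤ z := csInf_le hZbdd hzZ
    have hym : y < m := lt_of_le_of_ne hy.2 (by rintro rfl; linarith)
    linarith [hz.2]
  set h : ℝ → ℝ := fun x => ψ x * Real.exp (K * x) with hh
  have hhc : ContinuousOn h (Icc x₁ m) :=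
    (hcont.mono (Icc_subset_Icc le_rfl hmIcc.2)).mul
      ((Real.continuous_exp.comp (continuous_const.mul continuous_id)).continuousOn)
  have hanti : AntitoneOn h (Icc x₁ m) := by
    apply antitoneOn_of_deriv_nonpos (convex_Icc _ _) hhc
    · intro x hx
      rw [interior_Icc] at hx
      obtain ⟨d, hd, _⟩ := hder x ⟨hx.1, lt_of_lt_of_le hx.2 hmIcc.2⟩
      have hE : HasDerivAt (fun y : ℝ => Real.exp (K * y)) (K * Real.exp (K * x)) x := by
        have := (Real.hasDerivAt_exp (K * x)).comp x ((hasDerivAt_id x).const_mul K)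
        simpa [mul_comm, Function.comp_def] using this
      exact ((hd.mul hE).differentiableAt).differentiableWithinAt
    · intro x hx
      rw [interior_Icc] at hx
      obtain ⟨d, hd, hle⟩ := hder x ⟨hx.1, lt_of_lt_of_le hx.2 hmIcc.2⟩
      have hE : HasDerivAt (fun y : ℝ => Real.exp (K * y)) (K * Real.exp (K * x)) x := by
        have := (Real.hasDerivAt_exp (K * x)).comp x ((hasDerivAt_id x).const_mul K)
        simpa [mul_comm, Function.comp_def] using this
      have hD : HasDerivAt h (d * Real.exp (K * x) + ψ x * (K * Real.exp (K * x))) x := hd.mul hE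
      rw [hD.deriv]
      have hψx : ψ x ≤ 0 := hψle x ⟨hx.1.le, hx.2.le⟩
      have hsum : d + K * ψ x ≤ 0 := hle hψx
      have hexp := Real.exp_pos (K * x)
      nlinarith
  have h1 : h m ≤ h x₁ := hanti (left_mem_Icc.2 hx₁m.le) (right_mem_Icc.2 hx₁m.le) hx₁m.le
  have h2 : h m = 0 := by simp [hh, hψm]
  have h3 : h x₁ < 0 := mul_neg_of_neg_of_pos hneg (Real.exp_pos _)
  linarith

private lemma aux_deriv (S : Setting) (φ : ℝ → ℝ → ℝ → ℝ) (β θ : ℝ) (hθ : 0 < θ)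
    (hsol : IsAuxSol S.ε S.b S.σ S.c S.π β θ 0 (φ β θ)) (x : ℝ) (hx : x ∈ Ioo (0:ℝ) β) :
    HasDerivAt (fun y => φ β θ y + S.c y)
      ((2 / (S.σ x) ^ 2) *
        ((ell S.ε S.b S.σ S.c S.π β θ - ell S.ε S.b S.σ S.c S.π x θ)
          + (φ β θ x + S.c x) *
            (-(S.b x) - S.ε * (S.σ x) ^ 2 * S.c x
              + (S.ε / 2) * (S.σ x) ^ 2 * (φ β θ x + S.c x)))) x := by
  have hx0 : (0:ℝ) < x := hx.1
  have hmem : Ioi (0:ℝ) ∈ nhds x := isOpen_Ioi.mem_nhds hx0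
  have hφd : DifferentiableAt ℝ (φ β θ) x :=
    ((hsol.1.differentiableOn one_ne_zero).differentiableAt hmem)
  have hcd : DifferentiableAt ℝ S.c x :=
    ((S.hc.differentiableOn one_ne_zero).differentiableAt hmem)
  have h1 : HasDerivAt (fun y => φ β θ y + S.c y) (deriv (φ β θ) x + deriv S.c x) x :=
    hφd.hasDerivAt.add hcd.hasDerivAt
  have hode := hsol.2.1 x hx
  have hs : (S.σ x) ≠ 0 := (S.hσpos x hx0).ne'
  have heq : deriv (φ β θ) x + deriv S.c x
      = (2 / (S.σ x) ^ 2) *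
        ((ell S.ε S.b S.σ S.c S.π β θ - ell S.ε S.b S.σ S.c S.π x θ)
          + (φ β θ x + S.c x) *
            (-(S.b x) - S.ε * (S.σ x) ^ 2 * S.c x
              + (S.ε / 2) * (S.σ x) ^ 2 * (φ β θ x + S.c x))) := by
    simp only [ell] at hode ⊢
    field_simp
    linear_combination (2 : ℝ) * hode
  rw [← heq]
  exact h1

private lemma bound_exists (S : Setting) (φ : ℝ → ℝ → ℝ → ℝ) (β θ x₁ x₂ : ℝ)
    (hx₁ : 0 < x₁) (hφc : ContinuousOn (φ β θ) (Ioi 0)) :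
    ∃ K : ℝ, ∀ y ∈ Icc x₁ x₂,
      |(2 / (S.σ y) ^ 2) * (-(S.b y) - S.ε * (S.σ y) ^ 2 * S.c y
          + (S.ε / 2) * (S.σ y) ^ 2 * (φ β θ y + S.c y))| ≤ K := by
  have hsub : Icc x₁ x₂ ⊆ Ioi (0:ℝ) := fun y hy => lt_of_lt_of_le hx₁ hy.1
  have hσc : ContinuousOn S.σ (Icc x₁ x₂) := S.hσ.continuousOn.mono hsub
  have hbc : ContinuousOn S.b (Icc x₁ x₂) := S.hb.continuousOn.mono hsub
  have hcc : ContinuousOn S.c (Icc x₁ x₂) := S.hc.continuousOn.mono hsub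
  have hφcc : ContinuousOn (φ β θ) (Icc x₁ x₂) := hφc.mono hsub
  have hσne : ∀ y ∈ Icc x₁ x₂, (S.σ y) ^ 2 ≠ 0 :=
    fun y hy => (pow_pos (S.hσpos y (hsub hy)) 2).ne'
  have hAcont : ContinuousOn (fun y => (2 / (S.σ y) ^ 2) * (-(S.b y) - S.ε * (S.σ y) ^ 2 * S.c y
      + (S.ε / 2) * (S.σ y) ^ 2 * (φ β θ y + S.c y))) (Icc x₁ x₂) :=
    (continuousOn_const.div (hσc.pow 2) hσne).mul
      (((hbc.neg).sub ((continuousOn_const.mul (hσc.pow 2)).mul hcc)).add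
        ((continuousOn_const.mul (hσc.pow 2)).mul (hφcc.add hcc)))
  obtain ⟨K, hK⟩ := isCompact_Icc.exists_bound_of_continuousOn hAcont
  exact ⟨K, fun y hy => by simpa only [Real.norm_eq_abs] using hK y hy⟩

/-- location of the free boundary:
`(0, x̂_ε(θ)] ∩ B_ε(θ) = ∅`, `x̲̂_ε(θ) ∈ B_ε(θ)` and
`x̂_ε(θ) ≤ β_ε(θ) ≤ x̲̂_ε(θ)`. -/
theorem free_boundary_location (S : Setting) (φ : ℝ → ℝ → ℝ → ℝ)
    (hφ : ∀ β θ : ℝ, 0 < β → 0 < θ → IsAuxSol S.ε S.b S.σ S.c S.π β θ 0 (φ β θ)) :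
    ∀ θ : ℝ, 0 < θ →
      Ioc (0 : ℝ) (S.xhat θ) ∩ S.Bset φ θ = ∅ ∧
      S.xunder θ ∈ S.Bset φ θ ∧
      S.xhat θ ≤ S.betaE φ θ ∧ S.betaE φ θ ≤ S.xunder θ := by
  intro θ hθ
  have hxh : 0 < S.xhat θ := S.hxhatpos θ hθ
  -- continuity of ℓ on (0,∞)
  have hdc : ContinuousOn (deriv S.c) (Ioi 0) :=
    S.hc.continuousOn_deriv_of_isOpen isOpen_Ioi le_rfl
  have hLcont : ContinuousOn (fun y => ell S.ε S.b S.σ S.c S.π y θ) (Ioi 0) := by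
    have hb := S.hb.continuousOn
    have hσ := S.hσ.continuousOn
    have hc := S.hc.continuousOn
    have hπ := (S.hπC2 θ hθ).continuousOn
    unfold ell
    fun_prop
  -- strict monotonicity on (0, x̂]
  have hmono : StrictMonoOn (fun y => ell S.ε S.b S.σ S.c S.π y θ) (Ioc 0 (S.xhat θ)) := by
    apply strictMonoOn_of_deriv_pos (convex_Ioc _ _) (hLcont.mono Ioc_subset_Ioi_self)
    intro x hx
    rw [interior_Ioc] at hx
    exact S.hellincr θ hθ x hx.1 hx.2
  -- strict antitonicity on [x̂, ∞)
  have hanti : StrictAntiOn (fun y => ell S.ε S.b S.σ S.c S.π y θ) (Ici (S.xhat θ)) := by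
    apply strictAntiOn_of_deriv_neg (convex_Ici _)
      (hLcont.mono fun y hy => lt_of_lt_of_le hxh hy)
    intro x hx
    rw [interior_Ici] at hx
    exact S.helldecr θ hθ x hx
  -- ℓ ≥ ℓ0 on (0, x̂]
  have hge0 : ∀ x : ℝ, 0 < x → x ≤ S.xhat θ → S.ell0 θ ≤ ell S.ε S.b S.σ S.c S.π x θ := by
    intro x hx0 hxle
    apply le_of_tendsto (S.helllim0 θ hθ)
    filter_upwards [Ioo_mem_nhdsGT_of_mem (show (0:ℝ) ∈ Ico 0 x from ⟨le_rfl, hx0⟩)] with y hy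
    exact (hmono ⟨hy.1, hy.2.le.trans hxle⟩ ⟨hx0, hxle⟩ hy.2).le
  -- characterization of xunder
  obtain ⟨x₀, hx₀ge, hx₀eq⟩ := S.hxunder θ hθ
  have hxuEq : S.xunder θ = x₀ := by
    have hset : {x : ℝ | S.xhat θ ≤ x ∧ S.ellS x θ = S.ell0 θ} = {x₀} := by
      ext z
      simp only [mem_setOf_eq, mem_singleton_iff]
      constructor
      · rintro ⟨h1, h2⟩
        exact hanti.injOn h1 hx₀ge (h2.trans hx₀eq.symm)
      · rintro rfl
        exact ⟨hx₀ge, hx₀eq⟩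
    rw [Setting.xunder, hset, csInf_singleton]
  have hxu_ge : S.xhat θ ≤ S.xunder θ := by rw [hxuEq]; exact hx₀ge
  have hxu0 : 0 < S.xunder θ := lt_of_lt_of_le hxh hxu_ge
  have hLxu : ell S.ε S.b S.σ S.c S.π (S.xunder θ) θ = S.ell0 θ := by rw [hxuEq]; exact hx₀eq
  -- ℓ(xunder) ≤ ℓ(x) on (0, xunder]
  have hge : ∀ x : ℝ, 0 < x → x ≤ S.xunder θ →
      ell S.ε S.b S.σ S.c S.π (S.xunder θ) θ ≤ ell S.ε S.b S.σ S.c S.π x θ := by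
    intro x hx0 hxle
    rcases le_or_gt x (S.xhat θ) with h | h
    · rw [hLxu]; exact hge0 x hx0 h
    · rcases eq_or_lt_of_le hxle with rfl | hlt
      · exact le_rfl
      · exact (hanti h.le (le_trans h.le hxle) hlt).le
  -- Part (i): no β in (0, x̂] belongs to B
  have hempty : ∀ β : ℝ, β ∈ Ioc (0:ℝ) (S.xhat θ) → β ∉ S.Bset φ θ := by
    intro β hβmem hβB
    obtain ⟨hβ0, hβfun⟩ := hβB
    have hsol := hφ β θ hβ0 hθ
    have hβ2 : (0:ℝ) < β / 2 := half_pos hβ0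
    have hsub : Icc (β/2) β ⊆ Ioi (0:ℝ) := fun y hy => lt_of_lt_of_le hβ2 hy.1
    have hψcont : ContinuousOn (fun y => φ β θ y + S.c y) (Icc (β/2) β) :=
      (hsol.1.continuousOn.mono hsub).add (S.hc.continuousOn.mono hsub)
    have hψβ : φ β θ β + S.c β = 0 := by
      rw [hsol.2.2 β le_rfl]; ring
    obtain ⟨K, hK⟩ := bound_exists S φ β θ (β/2) β hβ2 hsol.1.continuousOn
    refine gron_pos (fun y => φ β θ y + S.c y) (β/2) β K (by linarith) hψcont hψβ ?_ ?_
    · intro x hx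
      have hx0 : 0 < x := hsub hx
      have := hβfun x hx0 hx.2
      beta_reduce
      linarith
    · intro y hy
      have hy0 : 0 < y := lt_trans hβ2 hy.1
      refine ⟨_, aux_deriv S φ β θ hθ hsol y ⟨hy0, hy.2⟩, ?_⟩
      have hσ2 : (0:ℝ) < (S.σ y) ^ 2 := pow_pos (S.hσpos y hy0) 2
      have hLy : ell S.ε S.b S.σ S.c S.π y θ < ell S.ε S.b S.σ S.c S.π β θ :=
        hmono ⟨hy0, hy.2.le.trans hβmem.2⟩ ⟨hβ0, hβmem.2⟩ hy.2
      have hf : 0 < (2 / (S.σ y) ^ 2) * (ell S.ε S.b S.σ S.c S.π β θ - ell S.ε S.b S.σ S.c S.π y θ) :=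
        mul_pos (div_pos two_pos hσ2) (sub_pos.2 hLy)
      have hψy : 0 ≤ φ β θ y + S.c y := by
        have := hβfun y hy0 hy.2.le; linarith
      have hKy := hK y ⟨hy.1.le, hy.2.le⟩
      have hAK : 0 ≤ (2 / (S.σ y) ^ 2) * (-(S.b y) - S.ε * (S.σ y) ^ 2 * S.c y
          + (S.ε / 2) * (S.σ y) ^ 2 * (φ β θ y + S.c y)) + K := by
        have := neg_abs_le ((2 / (S.σ y) ^ 2) * (-(S.b y) - S.ε * (S.σ y) ^ 2 * S.c y
          + (S.ε / 2) * (S.σ y) ^ 2 * (φ β θ y + S.c y)))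
        linarith
      have h2 : 0 ≤ ((2 / (S.σ y) ^ 2) * (-(S.b y) - S.ε * (S.σ y) ^ 2 * S.c y
          + (S.ε / 2) * (S.σ y) ^ 2 * (φ β θ y + S.c y)) + K) * (φ β θ y + S.c y) :=
        mul_nonneg hAK hψy
      nlinarith [hf, h2]
  -- Part (ii): xunder ∈ B
  have hxuB : S.xunder θ ∈ S.Bset φ θ := by
    have hsol := hφ (S.xunder θ) θ hxu0 hθ
    refine ⟨hxu0, ?_⟩
    intro x hx0 hxle
    by_contra hcon
    push_neg at hcon
    have hψx : φ (S.xunder θ) θ x + S.c x < 0 := by linarith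
    have hψend : φ (S.xunder θ) θ (S.xunder θ) + S.c (S.xunder θ) = 0 := by
      rw [hsol.2.2 (S.xunder θ) le_rfl]; ring
    have hxlt : x < S.xunder θ := by
      rcases eq_or_lt_of_le hxle with rfl | h
      · exact absurd hψend (by linarith)
      · exact h
    have hsub : Icc x (S.xunder θ) ⊆ Ioi (0:ℝ) := fun y hy => lt_of_lt_of_le hx0 hy.1
    have hψcont : ContinuousOn (fun y => φ (S.xunder θ) θ y + S.c y) (Icc x (S.xunder θ)) :=
      (hsol.1.continuousOn.mono hsub).add (S.hc.continuousOn.mono hsub)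
    obtain ⟨K, hK⟩ := bound_exists S φ (S.xunder θ) θ x (S.xunder θ) hx0 hsol.1.continuousOn
    refine gron_neg (fun y => φ (S.xunder θ) θ y + S.c y) x (S.xunder θ) K hxlt hψcont hψend hψx ?_
    intro y hy
    have hy0 : 0 < y := lt_trans hx0 hy.1
    refine ⟨_, aux_deriv S φ (S.xunder θ) θ hθ hsol y ⟨hy0, hy.2⟩, ?_⟩
    intro hψy
    have hσ2 : (0:ℝ) < (S.σ y) ^ 2 := pow_pos (S.hσpos y hy0) 2
    have hLy : ell S.ε S.b S.σ S.c S.π (S.xunder θ) θ ≤ ell S.ε S.b S.σ S.c S.π y θ :=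
      hge y hy0 hy.2.le
    have hf : (2 / (S.σ y) ^ 2) * (ell S.ε S.b S.σ S.c S.π (S.xunder θ) θ
        - ell S.ε S.b S.σ S.c S.π y θ) ≤ 0 :=
      mul_nonpos_of_nonneg_of_nonpos (div_pos two_pos hσ2).le (by linarith)
    have hKy := hK y ⟨hy.1.le, hy.2.le⟩
    have hAK : 0 ≤ (2 / (S.σ y) ^ 2) * (-(S.b y) - S.ε * (S.σ y) ^ 2 * S.c y
        + (S.ε / 2) * (S.σ y) ^ 2 * (φ (S.xunder θ) θ y + S.c y)) + K := by
      have := neg_abs_le ((2 / (S.σ y) ^ 2) * (-(S.b y) - S.ε * (S.σ y) ^ 2 * S.c y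
        + (S.ε / 2) * (S.σ y) ^ 2 * (φ (S.xunder θ) θ y + S.c y)))
      linarith
    have h2 : ((2 / (S.σ y) ^ 2) * (-(S.b y) - S.ε * (S.σ y) ^ 2 * S.c y
        + (S.ε / 2) * (S.σ y) ^ 2 * (φ (S.xunder θ) θ y + S.c y)) + K)
          * (φ (S.xunder θ) θ y + S.c y) ≤ 0 :=
      mul_nonpos_of_nonneg_of_nonpos hAK hψy
    nlinarith [hf, h2]
  -- conclusion
  refine ⟨?_, hxuB, ?_, ?_⟩
  · rw [eq_empty_iff_forall_notMem]
    intro β hβ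
    exact hempty β hβ.1 hβ.2
  · apply le_csInf ⟨_, hxuB⟩
    intro β hβ
    by_contra h
    push_neg at h
    exact hempty β ⟨hβ.1, h.le⟩ hβ
  · exact csInf_le ⟨0, fun b hb => hb.1.le⟩ hxuB
end
end

section
/- The free-boundary map θ ↦ β_ε(θ) is nonincreasing on (0,∞): if 0 < θ₁ ≤ θ₂ then β_ε(θ₂) ≤ β_ε(θ₁). -/
open Set Filter Topology MeasureTheory

noncomputable section

/-- A Gronwall-type comparison lemma: if `h' ≤ p·h` on `(a,β)` with `h(β) = 0`,
then `h(a) ≥ 0`. -/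
lemma gron_aux {h p : ℝ → ℝ} {a β : ℝ} (hab : a < β)
    (hch : ContinuousOn h (Icc a β)) (hcp : ContinuousOn p (Icc a β))
    (hd : ∀ x ∈ Ioo a β, DifferentiableAt ℝ h x ∧ deriv h x ≤ p x * h x)
    (hβ : h β = 0) : 0 ≤ h a := by
  by_contra hneg
  push_neg at hneg
  obtain ⟨K, hK⟩ := (isCompact_Icc (a := a) (b := β)).exists_bound_of_continuousOn hcp
  set Z : Set ℝ := {x | x ∈ Icc a β ∧ h x = 0} with hZdef
  have hZclosed : IsClosed Z := by
    have hZeq : Z = Icc a β ∩ h ⁻¹' {0} := by ext x; simp [hZdef]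
    rw [hZeq]
    exact hch.preimage_isClosed_of_isClosed isClosed_Icc isClosed_singleton
  have hZne : Z.Nonempty := ⟨β, ⟨le_of_lt hab, le_rfl⟩, hβ⟩
  have hZbdd : BddBelow Z := ⟨a, fun x hx => hx.1.1⟩
  set z := sInf Z with hz
  have hzZ : z ∈ Z := hZclosed.csInf_mem hZne hZbdd
  have haz : a < z := by
    rcases lt_or_eq_of_le hzZ.1.1 with hlt | heq
    · exact hlt
    · exfalso; rw [← heq] at hzZ; rw [hzZ.2] at hneg; exact lt_irrefl 0 hneg
  have hzβ : z ≤ β := hzZ.1.2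
  have hle : ∀ x ∈ Icc a z, h x ≤ 0 := by
    intro x hx
    by_contra hpos
    push_neg at hpos
    have hxz : x ≤ z := hx.2
    have hxb : x ≤ β := le_trans hxz hzβ
    have hsub : Icc a x ⊆ Icc a β := Icc_subset_Icc le_rfl hxb
    have hmem : (0 : ℝ) ∈ h '' Icc a x := by
      apply intermediate_value_Icc hx.1 (hch.mono hsub)
      exact ⟨le_of_lt hneg, le_of_lt hpos⟩
    obtain ⟨y, hy, hy0⟩ := hmem
    have hyZ : y ∈ Z := ⟨⟨hy.1, le_trans hy.2 hxb⟩, hy0⟩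
    have hzy : z ≤ y := csInf_le hZbdd hyZ
    have hyz : y = z := le_antisymm (le_trans hy.2 hxz) hzy
    have hxy : x = y := le_antisymm (hyz ▸ hxz) hy.2
    rw [hxy, hy0] at hpos
    exact lt_irrefl 0 hpos
  have hE : ∀ x : ℝ, HasDerivAt (fun t => Real.exp (K * t)) (Real.exp (K * x) * K) x :=
    fun x => by simpa using ((hasDerivAt_id x).const_mul K).exp
  set u : ℝ → ℝ := fun x => h x * Real.exp (K * x) with hu
  have hderivu : ∀ x ∈ Ioo a z, HasDerivAt u
      (deriv h x * Real.exp (K * x) + h x * (Real.exp (K * x) * K)) x := by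
    intro x hx
    have hx' : x ∈ Ioo a β := ⟨hx.1, lt_of_lt_of_le hx.2 hzβ⟩
    exact ((hd x hx').1.hasDerivAt).mul (hE x)
  have hmono : AntitoneOn u (Icc a z) := by
    apply antitoneOn_of_deriv_nonpos (convex_Icc a z)
    · exact (hch.mono (Icc_subset_Icc le_rfl hzβ)).mul
        (Real.continuous_exp.comp (continuous_const.mul continuous_id)).continuousOn
    · rw [interior_Icc]
      exact fun x hx => (hderivu x hx).differentiableAt.differentiableWithinAt
    · rw [interior_Icc]
      intro x hx
      rw [(hderivu x hx).deriv]
      have hx' : x ∈ Ioo a β := ⟨hx.1, lt_of_lt_of_le hx.2 hzβ⟩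
      have h1 : deriv h x ≤ p x * h x := (hd x hx').2
      have h2 : h x ≤ 0 := hle x ⟨le_of_lt hx.1, le_of_lt hx.2⟩
      have h3 : |p x| ≤ K := by
        have := hK x ⟨le_of_lt hx'.1, le_of_lt hx'.2⟩
        simpa [Real.norm_eq_abs] using this
      have h4 : (p x + K) * h x ≤ 0 := by
        apply mul_nonpos_of_nonneg_of_nonpos _ h2
        have := abs_le.mp h3
        linarith [this.1]
      have h5 : deriv h x + K * h x ≤ 0 := by nlinarith
      nlinarith [Real.exp_pos (K * x)]
  have huz : u z ≤ u a := hmono ⟨le_rfl, le_of_lt haz⟩ ⟨le_of_lt haz, le_rfl⟩ (le_of_lt haz)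
  have huz0 : u z = 0 := by simp [hu, hzZ.2]
  have hua : u a < 0 := mul_neg_of_neg_of_pos hneg (Real.exp_pos _)
  rw [huz0] at huz
  linarith

/-- `π_x` is antitone in `θ`. -/
lemma pix_anti (S : Setting) {y θ₁ θ₂ : ℝ} (hy : 0 < y) (h1 : 0 < θ₁) (h12 : θ₁ ≤ θ₂) :
    deriv (fun x' => S.π x' θ₂) y ≤ deriv (fun x' => S.π x' θ₁) y := by
  set F : ℝ → ℝ := fun θ => deriv (fun x' => S.π x' θ) y with hF
  have hdiff : ∀ θ ∈ Ioi (0 : ℝ), DifferentiableAt ℝ F θ := by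
    intro θ hθ
    by_contra hnd
    have hzero := deriv_zero_of_not_differentiableAt hnd
    have hneg := S.hπxθneg y θ hy hθ
    rw [hF] at hzero
    rw [hzero] at hneg
    exact lt_irrefl 0 hneg
  have hanti : StrictAntiOn F (Ioi 0) := by
    apply strictAntiOn_of_deriv_neg (convex_Ioi 0)
    · exact fun θ hθ => (hdiff θ hθ).continuousAt.continuousWithinAt
    · rw [interior_Ioi]
      exact fun θ hθ => S.hπxθneg y θ hy hθ
  rcases eq_or_lt_of_le h12 with he | hl
  · rw [he]
  · exact le_of_lt (hanti (mem_Ioi.2 h1) (mem_Ioi.2 (lt_trans h1 hl)) hl)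

/-- `π(·,θ₂) − π(·,θ₁)` is antitone in `x`. -/
lemma pi_diff_anti (S : Setting) {θ₁ θ₂ y β : ℝ} (h1 : 0 < θ₁) (h12 : θ₁ ≤ θ₂)
    (hy : 0 < y) (hyβ : y ≤ β) :
    S.π β θ₂ - S.π β θ₁ ≤ S.π y θ₂ - S.π y θ₁ := by
  have hθ₂ : 0 < θ₂ := lt_of_lt_of_le h1 h12
  have hd2 : DifferentiableOn ℝ (fun x => S.π x θ₂) (Ioi 0) :=
    (S.hπC2 θ₂ hθ₂).differentiableOn two_ne_zero
  have hd1 : DifferentiableOn ℝ (fun x => S.π x θ₁) (Ioi 0) :=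
    (S.hπC2 θ₁ h1).differentiableOn two_ne_zero
  have hsub : Icc y β ⊆ Ioi 0 := fun t ht => lt_of_lt_of_le hy ht.1
  have hga : AntitoneOn (fun x => S.π x θ₂ - S.π x θ₁) (Icc y β) := by
    apply antitoneOn_of_deriv_nonpos (convex_Icc y β)
    · exact ((S.hπC2 θ₂ hθ₂).continuousOn.mono hsub).sub
        ((S.hπC2 θ₁ h1).continuousOn.mono hsub)
    · rw [interior_Icc]
      intro x hx
      have hx0 : 0 < x := lt_trans hy hx.1
      exact ((hd2.differentiableAt (Ioi_mem_nhds hx0)).sub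
        (hd1.differentiableAt (Ioi_mem_nhds hx0))).differentiableWithinAt
    · rw [interior_Icc]
      intro x hx
      have hx0 : 0 < x := lt_trans hy hx.1
      rw [deriv_fun_sub (hd2.differentiableAt (Ioi_mem_nhds hx0))
        (hd1.differentiableAt (Ioi_mem_nhds hx0))]
      have := pix_anti S hx0 h1 h12
      linarith
  exact hga ⟨le_rfl, hyβ⟩ ⟨hyβ, le_rfl⟩ hyβ

/-- Comparison in `θ` for solutions of the auxiliary problem. -/
lemma phi_mono_theta (S : Setting) (φ : ℝ → ℝ → ℝ → ℝ)
    (hφ : ∀ β θ : ℝ, 0 < β → 0 < θ → IsAuxSol S.ε S.b S.σ S.c S.π β θ 0 (φ β θ))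
    {β θ₁ θ₂ x : ℝ} (hβ : 0 < β) (h1 : 0 < θ₁) (h12 : θ₁ ≤ θ₂) (hx : 0 < x)
    (hxβ : x ≤ β) : φ β θ₁ x ≤ φ β θ₂ x := by
  have hθ₂ : 0 < θ₂ := lt_of_lt_of_le h1 h12
  obtain ⟨hr1, he1, hb1⟩ := hφ β θ₁ hβ h1
  obtain ⟨hr2, he2, hb2⟩ := hφ β θ₂ hβ hθ₂
  rcases eq_or_lt_of_le hxβ with he | hlt
  · rw [he, hb1 β le_rfl, hb2 β le_rfl]
  · have hsub : Icc x β ⊆ Ioi 0 := fun t ht => lt_of_lt_of_le hx ht.1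
    have key : 0 ≤ φ β θ₂ x - φ β θ₁ x := by
      apply gron_aux (h := fun y => φ β θ₂ y - φ β θ₁ y)
        (p := fun y => 2 / (S.σ y) ^ 2 * (-S.b y) + S.ε * (φ β θ₁ y + φ β θ₂ y)) hlt
      · exact (hr2.continuousOn.mono hsub).sub (hr1.continuousOn.mono hsub)
      · apply ContinuousOn.add
        · apply ContinuousOn.mul
          · apply ContinuousOn.div continuousOn_const
              (((S.hσ.continuousOn).mono hsub).pow 2)
            exact fun y hy => pow_ne_zero 2 (ne_of_gt (S.hσpos y (hsub hy)))
          · exact ((S.hb.continuousOn).mono hsub).neg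
        · exact continuousOn_const.mul
            ((hr1.continuousOn.mono hsub).add (hr2.continuousOn.mono hsub))
      · intro y hy
        have hy0 : 0 < y := lt_trans hx hy.1
        have hyIoo : y ∈ Ioo (0 : ℝ) β := ⟨hy0, hy.2⟩
        have hd1 : DifferentiableAt ℝ (φ β θ₁) y :=
          (hr1.differentiableOn one_ne_zero).differentiableAt (Ioi_mem_nhds hy0)
        have hd2 : DifferentiableAt ℝ (φ β θ₂) y :=
          (hr2.differentiableOn one_ne_zero).differentiableAt (Ioi_mem_nhds hy0)
        refine ⟨hd2.sub hd1, ?_⟩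
        rw [deriv_fun_sub hd2 hd1]
        have e1 := he1 y hyIoo
        have e2 := he2 y hyIoo
        have hΔ : ell S.ε S.b S.σ S.c S.π β θ₂ - S.π y θ₂
            ≤ ell S.ε S.b S.σ S.c S.π β θ₁ - S.π y θ₁ := by
          have hpd := pi_diff_anti S h1 h12 hy0 (le_of_lt hy.2)
          simp only [ell]
          linarith
        have hs : (0 : ℝ) < (S.σ y) ^ 2 := pow_pos (S.hσpos y hy0) 2
        have hsne : (S.σ y) ^ 2 ≠ 0 := ne_of_gt hs
        have goal2 : (S.σ y) ^ 2 * (deriv (φ β θ₂) y - deriv (φ β θ₁) y)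
            ≤ (S.σ y) ^ 2 * ((2 / (S.σ y) ^ 2 * (-S.b y)
              + S.ε * (φ β θ₁ y + φ β θ₂ y)) * (φ β θ₂ y - φ β θ₁ y)) := by
          have hexp : (S.σ y) ^ 2 * ((2 / (S.σ y) ^ 2 * (-S.b y)
              + S.ε * (φ β θ₁ y + φ β θ₂ y)) * (φ β θ₂ y - φ β θ₁ y))
              = -2 * S.b y * (φ β θ₂ y - φ β θ₁ y)
                + (S.σ y) ^ 2 * S.ε * (φ β θ₁ y + φ β θ₂ y) * (φ β θ₂ y - φ β θ₁ y) := by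
            field_simp [(S.hσpos y hy0).ne']
          rw [hexp]
          nlinarith [e1, e2, hΔ]
        exact le_of_mul_le_mul_left goal2 hs
      · rw [hb1 β le_rfl, hb2 β le_rfl]; ring
    linarith

/-- `B_ε(θ)` is nonempty. -/
lemma Bset_nonempty (S : Setting) (φ : ℝ → ℝ → ℝ → ℝ)
    (hφ : ∀ β θ : ℝ, 0 < β → 0 < θ → IsAuxSol S.ε S.b S.σ S.c S.π β θ 0 (φ β θ))
    {θ : ℝ} (hθ : 0 < θ) : (S.Bset φ θ).Nonempty := by
  obtain ⟨x₀, hx₀hat, hx₀eq⟩ := S.hxunder θ hθ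
  have hxhat := S.hxhatpos θ hθ
  have hx₀pos : 0 < x₀ := lt_of_lt_of_le hxhat hx₀hat
  set β := x₀ + 1 with hβdef
  have hβpos : 0 < β := by positivity
  have hx₀β : x₀ < β := by simp [hβdef]
  set L : ℝ → ℝ := fun x => ell S.ε S.b S.σ S.c S.π x θ with hL
  have hc' : ContinuousOn (deriv S.c) (Ioi 0) :=
    S.hc.continuousOn_deriv_of_isOpen isOpen_Ioi le_rfl
  have hLcont : ContinuousOn L (Ioi 0) := by
    simp only [hL, ell]
    exact ((S.hb.continuousOn.neg.mul S.hc.continuousOn).add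
        (S.hπC2 θ hθ).continuousOn).sub
      ((continuousOn_const.mul ((S.hσ.continuousOn).pow 2)).mul
        ((continuousOn_const.mul (S.hc.continuousOn.pow 2)).add hc'))
  have hLanti : StrictAntiOn L (Ici (S.xhat θ)) := by
    apply strictAntiOn_of_deriv_neg (convex_Ici _)
    · exact hLcont.mono (fun t ht => lt_of_lt_of_le hxhat ht)
    · rw [interior_Ici]
      exact fun t ht => S.helldecr θ hθ t ht
  have hLmono : StrictMonoOn L (Ioc 0 (S.xhat θ)) := by
    apply strictMonoOn_of_deriv_pos (convex_Ioc _ _)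
    · exact hLcont.mono (fun t ht => ht.1)
    · rw [interior_Ioc]
      exact fun t ht => S.hellincr θ hθ t ht.1 ht.2
  have hkey : ∀ x : ℝ, 0 < x → x < β → L β ≤ L x := by
    intro x hx hxβ
    have hβIci : β ∈ Ici (S.xhat θ) := le_trans hx₀hat (le_of_lt hx₀β)
    by_cases hcase : S.xhat θ ≤ x
    · exact le_of_lt (hLanti hcase hβIci hxβ)
    · push_neg at hcase
      have h0 : S.ell0 θ ≤ L x := by
        apply le_of_tendsto (S.helllim0 θ hθ)
        have hmem : Ioo (0 : ℝ) x ∈ nhdsWithin 0 (Ioi (0 : ℝ)) :=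
          Ioo_mem_nhdsGT_of_mem ⟨le_rfl, hx⟩
        filter_upwards [hmem] with y hy
        exact le_of_lt (hLmono ⟨hy.1, le_of_lt (lt_trans hy.2 hcase)⟩
          ⟨hx, le_of_lt hcase⟩ hy.2)
      have hLβ : L β < S.ell0 θ := by
        rw [← hx₀eq]
        exact hLanti hx₀hat hβIci hx₀β
      linarith
  refine ⟨β, hβpos, ?_⟩
  intro x hx hxβ
  obtain ⟨hr, he, hb⟩ := hφ β θ hβpos hθ
  rcases eq_or_lt_of_le hxβ with heq | hlt
  · rw [heq, hb β le_rfl]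
  · have hsub : Icc x β ⊆ Ioi 0 := fun t ht => lt_of_lt_of_le hx ht.1
    have hψ : 0 ≤ φ β θ x + S.c x := by
      apply gron_aux (h := fun y => φ β θ y + S.c y)
        (p := fun y => 2 / (S.σ y) ^ 2 * (-S.b y) + S.ε * (φ β θ y - S.c y)) hlt
      · exact (hr.continuousOn.mono hsub).add (S.hc.continuousOn.mono hsub)
      · apply ContinuousOn.add
        · apply ContinuousOn.mul
          · apply ContinuousOn.div continuousOn_const
              (((S.hσ.continuousOn).mono hsub).pow 2)
            exact fun y hy => pow_ne_zero 2 (ne_of_gt (S.hσpos y (hsub hy)))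
          · exact ((S.hb.continuousOn).mono hsub).neg
        · exact continuousOn_const.mul
            ((hr.continuousOn.mono hsub).sub (S.hc.continuousOn.mono hsub))
      · intro y hy
        have hy0 : 0 < y := lt_trans hx hy.1
        have hdφ : DifferentiableAt ℝ (φ β θ) y :=
          (hr.differentiableOn one_ne_zero).differentiableAt (Ioi_mem_nhds hy0)
        have hdc : DifferentiableAt ℝ S.c y :=
          (S.hc.differentiableOn one_ne_zero).differentiableAt (Ioi_mem_nhds hy0)
        refine ⟨hdφ.add hdc, ?_⟩
        rw [deriv_fun_add hdφ hdc]
        have e := he y ⟨hy0, hy.2⟩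
        have hkeyy := hkey y hy0 hy.2
        have hs : (0 : ℝ) < (S.σ y) ^ 2 := pow_pos (S.hσpos y hy0) 2
        have hsne : (S.σ y) ^ 2 ≠ 0 := ne_of_gt hs
        have goal2 : (S.σ y) ^ 2 * (deriv (φ β θ) y + deriv S.c y)
            ≤ (S.σ y) ^ 2 * ((2 / (S.σ y) ^ 2 * (-S.b y)
              + S.ε * (φ β θ y - S.c y)) * (φ β θ y + S.c y)) := by
          have hexp : (S.σ y) ^ 2 * ((2 / (S.σ y) ^ 2 * (-S.b y)
              + S.ε * (φ β θ y - S.c y)) * (φ β θ y + S.c y))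
              = -2 * S.b y * (φ β θ y + S.c y)
                + (S.σ y) ^ 2 * S.ε * (φ β θ y - S.c y) * (φ β θ y + S.c y) := by
            field_simp [(S.hσpos y hy0).ne']
          rw [hexp]
          simp only [hL, ell] at hkeyy
          simp only [ell] at e
          nlinarith [e, hkeyy]
        exact le_of_mul_le_mul_left goal2 hs
      · rw [hb β le_rfl]; ring
    linarith

/-- the free-boundary map `θ ↦ β_ε(θ)` is nonincreasing on `(0,∞)`. -/
theorem free_boundary_nonincreasing (S : Setting) (φ : ℝ → ℝ → ℝ → ℝ)
    (hφ : ∀ β θ : ℝ, 0 < β → 0 < θ → IsAuxSol S.ε S.b S.σ S.c S.π β θ 0 (φ β θ)) :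
    ∀ θ₁ θ₂ : ℝ, 0 < θ₁ → θ₁ ≤ θ₂ → S.betaE φ θ₂ ≤ S.betaE φ θ₁ := by
  intro θ₁ θ₂ h1 h12
  have hθ₂ : 0 < θ₂ := lt_of_lt_of_le h1 h12
  have hsubset : S.Bset φ θ₁ ⊆ S.Bset φ θ₂ := by
    rintro β ⟨hβ, hβall⟩
    exact ⟨hβ, fun x hx hxβ => le_trans (hβall x hx hxβ)
      (phi_mono_theta S φ hφ hβ h1 h12 hx hxβ)⟩
  exact csInf_le_csInf ⟨0, fun β hβ => le_of_lt hβ.1⟩ (Bset_nonempty S φ hφ h1) hsubset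
end
end

section
/- There exists β̲_ε > 0 such that β_ε(θ) ≥ β̲_ε for every θ > 0; i.e., the free boundary is bounded away from 0 uniformly in the mean-field parameter θ. -/
open Set Filter Topology MeasureTheory

noncomputable section

/-- Key integrating-factor lemma: for an auxiliary solution `φ₀` on `(0,β)`, the function
`F x = exp(Q x) * (φ₀ x + c x)` (with suitable integrating factor `Q`) vanishes at `β` and has
derivative of the sign of `ℓ(β,θ) − ℓ(x,θ)`. -/
lemma aux_integrating_factor (S : Setting) {β θ : ℝ} (hβ : 0 < β) (hθ : 0 < θ)
    {φ₀ : ℝ → ℝ} (hsol : IsAuxSol S.ε S.b S.σ S.c S.π β θ 0 φ₀)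
    {a : ℝ} (ha : 0 < a) (hab : a < β) :
    ∃ F E : ℝ → ℝ, ContinuousOn F (Icc a β) ∧ F β = 0 ∧
      (∀ x ∈ Icc a β, (F x < 0 ↔ φ₀ x + S.c x < 0) ∧ (0 ≤ F x ↔ 0 ≤ φ₀ x + S.c x)) ∧
      (∀ x ∈ Ioo a β, 0 < E x ∧
        HasDerivAt F (E x * (ell S.ε S.b S.σ S.c S.π β θ - ell S.ε S.b S.σ S.c S.π x θ)) x) := by
  set g : ℝ → ℝ := fun t =>
    (2 * (S.b t - (S.ε / 2) * (S.σ t) ^ 2 * (φ₀ t - S.c t))) / (S.σ t) ^ 2 with hg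
  have contφ : ContinuousOn φ₀ (Ioi 0) := hsol.1.continuousOn
  have contc : ContinuousOn S.c (Ioi 0) := S.hc.continuousOn
  have contb : ContinuousOn S.b (Ioi 0) := S.hb.continuousOn
  have contσ : ContinuousOn S.σ (Ioi 0) := S.hσ.continuousOn
  have hσne : ∀ t ∈ Ioi (0:ℝ), (S.σ t) ^ 2 ≠ 0 := fun t ht =>
    pow_ne_zero _ (S.hσpos t ht).ne'
  have contg : ContinuousOn g (Ioi 0) := by
    apply ContinuousOn.div
    · exact continuousOn_const.mul (contb.sub
        ((continuousOn_const.mul (contσ.pow 2)).mul (contφ.sub contc)))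
    · exact contσ.pow 2
    · exact hσne
  set Q : ℝ → ℝ := fun x => ∫ t in a..x, g t with hQdef
  have hQ : ∀ x ∈ Ioi (0:ℝ), HasDerivAt Q (g x) x := by
    intro x hx
    apply intervalIntegral.integral_hasDerivAt_right
    · apply ContinuousOn.intervalIntegrable
      apply contg.mono
      intro t ht
      rw [Set.mem_uIcc] at ht
      rcases ht with ht | ht
      · exact lt_of_lt_of_le ha ht.1
      · exact lt_of_lt_of_le hx ht.1
    · exact ContinuousOn.stronglyMeasurableAtFilter isOpen_Ioi contg x hx
    · exact contg.continuousAt (isOpen_Ioi.mem_nhds hx)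
  set F : ℝ → ℝ := fun x => Real.exp (Q x) * (φ₀ x + S.c x) with hFdef
  have hsub : Icc a β ⊆ Ioi (0:ℝ) := fun t ht => lt_of_lt_of_le ha ht.1
  refine ⟨F, fun x => Real.exp (Q x) * (2 / (S.σ x) ^ 2), ?_, ?_, ?_, ?_⟩
  · apply ContinuousOn.mul
    · exact Real.continuous_exp.comp_continuousOn
        (fun x hx => ((hQ x (hsub hx)).continuousAt).continuousWithinAt)
    · exact ((contφ.add contc).mono hsub)
  · have : φ₀ β = -(S.c β) := hsol.2.2 β le_rfl
    simp [hFdef, this]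
  · intro x _
    have he : 0 < Real.exp (Q x) := Real.exp_pos _
    have hFx : F x = Real.exp (Q x) * (φ₀ x + S.c x) := rfl
    rw [hFx]
    constructor
    · constructor <;> intro h <;> nlinarith
    · constructor <;> intro h <;> nlinarith
  · intro x hx
    have hx0 : (0:ℝ) < x := lt_trans ha hx.1
    have hσx : 0 < S.σ x := S.hσpos x hx0
    refine ⟨mul_pos (Real.exp_pos _) (div_pos two_pos (pow_pos hσx 2)), ?_⟩
    have hφd : DifferentiableAt ℝ φ₀ x :=
      (hsol.1.differentiableOn one_ne_zero).differentiableAt (isOpen_Ioi.mem_nhds hx0)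
    have hcd : DifferentiableAt ℝ S.c x :=
      (S.hc.differentiableOn one_ne_zero).differentiableAt (isOpen_Ioi.mem_nhds hx0)
    have hQx := hQ x hx0
    have hE : HasDerivAt (fun y => Real.exp (Q y)) (Real.exp (Q x) * g x) x := hQx.exp
    have hh : HasDerivAt (fun y => φ₀ y + S.c y) (deriv φ₀ x + deriv S.c x) x :=
      (hφd.hasDerivAt).add (hcd.hasDerivAt)
    have hF : HasDerivAt F
        (Real.exp (Q x) * g x * (φ₀ x + S.c x)
          + Real.exp (Q x) * (deriv φ₀ x + deriv S.c x)) x := hE.mul hh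
    have hode := hsol.2.1 x ⟨hx0, hx.2⟩
    have hs2 : (S.σ x) ^ 2 ≠ 0 := hσne x hx0
    have key : g x * (φ₀ x + S.c x) + (deriv φ₀ x + deriv S.c x)
        = 2 / (S.σ x) ^ 2 * (ell S.ε S.b S.σ S.c S.π β θ - ell S.ε S.b S.σ S.c S.π x θ) := by
      have hellx : ell S.ε S.b S.σ S.c S.π x θ
          = -(S.b x) * S.c x + S.π x θ
            - (1 / 2) * (S.σ x) ^ 2 * (S.ε * (S.c x) ^ 2 + deriv S.c x) := rfl
      rw [hellx, hg]
      field_simp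
      nlinarith [hode, sq_nonneg (S.σ x)]
    have : Real.exp (Q x) * g x * (φ₀ x + S.c x)
          + Real.exp (Q x) * (deriv φ₀ x + deriv S.c x)
        = Real.exp (Q x) * (2 / (S.σ x) ^ 2)
          * (ell S.ε S.b S.σ S.c S.π β θ - ell S.ε S.b S.σ S.c S.π x θ) := by
      have := key
      nlinarith [Real.exp_pos (Q x), this]
    rw [← this]
    exact hF

/-- the free boundary is bounded away from `0` uniformly in `θ`. -/
theorem free_boundary_uniform_lower_bound (S : Setting) (φ : ℝ → ℝ → ℝ → ℝ)
    (hφ : ∀ β θ : ℝ, 0 < β → 0 < θ → IsAuxSol S.ε S.b S.σ S.c S.π β θ 0 (φ β θ))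
    (κ : ℝ → ℝ) (hκC1 : ContDiffOn ℝ 1 κ (Ioi 0)) (hκpos : ∀ x : ℝ, 0 < x → 0 < κ x)
    (hπto0 : ∀ x : ℝ, 0 < x → Tendsto (fun θ => S.π x θ) (nhdsWithin 0 (Ioi 0)) atTop)
    (hπtoκ : ∀ x : ℝ, 0 < x → Tendsto (fun θ => S.π x θ) atTop (nhds (κ x)))
    (hπxκ : ∀ x θ : ℝ, 0 < x → 0 < θ → deriv κ x ≤ deriv (fun y => S.π y θ) x)
    (hLip : ∃ δ ∈ Ioo (0 : ℝ) 1, ∃ C > (0 : ℝ), ∀ x θ₁ θ₂ : ℝ,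
      0 < x → 0 < θ₁ → 0 < θ₂ → |S.π x θ₂ - S.π x θ₁| ≤ C * (1 + x ^ δ) * |θ₂ - θ₁|)
    (yhat : ℝ) (hyhat : 0 < yhat)
    (hκmono : StrictMonoOn (ellKappa S.ε S.b S.σ S.c κ) (Ioo 0 yhat))
    (hκanti : StrictAntiOn (ellKappa S.ε S.b S.σ S.c κ) (Ioi yhat))
    (hκbot : Tendsto (ellKappa S.ε S.b S.σ S.c κ) atTop atBot)
    (L0 : ℝ)
    (hκlim0 : Tendsto (ellKappa S.ε S.b S.σ S.c κ) (nhdsWithin 0 (Ioi 0)) (nhds L0))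
    (hyunder : ∃ x : ℝ, yhat ≤ x ∧ ellKappa S.ε S.b S.σ S.c κ x = L0) :
    ∃ βlow > (0 : ℝ), ∀ θ : ℝ, 0 < θ → βlow ≤ S.betaE φ θ := by
  refine ⟨yhat, hyhat, fun θ hθ => ?_⟩
  have contdc : ContinuousOn (deriv S.c) (Ioi 0) :=
    S.hc.continuousOn_deriv_of_isOpen isOpen_Ioi le_rfl
  have contℓ : ContinuousOn (fun y => ell S.ε S.b S.σ S.c S.π y θ) (Ioi 0) := by
    have hrw : (fun y => ell S.ε S.b S.σ S.c S.π y θ)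
        = fun y => -(S.b y) * S.c y + S.π y θ
            - (1 / 2) * (S.σ y) ^ 2 * (S.ε * (S.c y) ^ 2 + deriv S.c y) := rfl
    rw [hrw]
    exact ((S.hb.continuousOn.neg.mul S.hc.continuousOn).add
        (S.hπC2 θ hθ).continuousOn).sub
      ((continuousOn_const.mul (S.hσ.continuousOn.pow 2)).mul
        ((continuousOn_const.mul (S.hc.continuousOn.pow 2)).add contdc))
  have dmono : MonotoneOn (fun y => S.π y θ - κ y) (Ioi 0) := by
    apply monotoneOn_of_deriv_nonneg (convex_Ioi 0)
    · exact ((S.hπC2 θ hθ).continuousOn).sub hκC1.continuousOn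
    · rw [interior_Ioi]
      exact ((S.hπC2 θ hθ).differentiableOn (by norm_num)).sub (hκC1.differentiableOn one_ne_zero)
    · intro y hy
      rw [interior_Ioi] at hy
      have hπd : DifferentiableAt ℝ (fun x => S.π x θ) y :=
        ((S.hπC2 θ hθ).differentiableOn (by norm_num)).differentiableAt
          (isOpen_Ioi.mem_nhds hy)
      have hκd : DifferentiableAt ℝ κ y :=
        (hκC1.differentiableOn one_ne_zero).differentiableAt (isOpen_Ioi.mem_nhds hy)
      rw [deriv_fun_sub hπd hκd, sub_nonneg]
      exact hπxκ y θ hy hθ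
  have hdec : ∀ z : ℝ, ell S.ε S.b S.σ S.c S.π z θ
      = ellKappa S.ε S.b S.σ S.c κ z + (S.π z θ - κ z) := by
    intro z; simp only [ell, ellKappa]; ring
  -- Step 1: every element of `Bset` is at least `yhat`.
  have hlb : ∀ β ∈ S.Bset φ θ, yhat ≤ β := by
    intro β hmem
    by_contra hlt
    push_neg at hlt
    obtain ⟨hβpos, hβge⟩ := hmem
    have ha : 0 < β / 2 := by linarith
    have hab : β / 2 < β := by linarith
    obtain ⟨F, E, hFcont, hFβ, hsign, hFderiv⟩ :=
      aux_integrating_factor S hβpos hθ (hφ β θ hβpos hθ) ha hab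
    have hmono : StrictMonoOn F (Icc (β / 2) β) := by
      apply strictMonoOn_of_deriv_pos (convex_Icc _ _) hFcont
      intro x hx
      rw [interior_Icc] at hx
      obtain ⟨hE, hD⟩ := hFderiv x hx
      rw [hD.deriv]
      apply mul_pos hE
      rw [sub_pos, hdec β, hdec x]
      have hx0 : 0 < x := lt_trans ha hx.1
      have h1 : ellKappa S.ε S.b S.σ S.c κ x < ellKappa S.ε S.b S.σ S.c κ β :=
        hκmono ⟨hx0, lt_trans hx.2 hlt⟩ ⟨hβpos, hlt⟩ hx.2
      have h2 : S.π x θ - κ x ≤ S.π β θ - κ β := dmono hx0 hβpos hx.2.le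
      linarith
    have hFlt : F (β / 2) < F β :=
      hmono ⟨le_rfl, hab.le⟩ ⟨hab.le, le_rfl⟩ hab
    rw [hFβ] at hFlt
    have hneg : φ β θ (β / 2) + S.c (β / 2) < 0 :=
      ((hsign (β / 2) ⟨le_rfl, hab.le⟩).1).mp hFlt
    have := hβge (β / 2) ha hab.le
    linarith
  -- Step 2: `Bset` is nonempty.
  obtain ⟨β', hβ'ge, hβ'val⟩ := S.hxunder θ hθ
  have hxhp : 0 < S.xhat θ := S.hxhatpos θ hθ
  have hβ'pos : 0 < β' := lt_of_lt_of_le hxhp hβ'ge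
  have mono1 : StrictMonoOn (fun y => ell S.ε S.b S.σ S.c S.π y θ) (Ioo 0 (S.xhat θ)) := by
    apply strictMonoOn_of_deriv_pos (convex_Ioo _ _) (contℓ.mono fun t ht => ht.1)
    intro y hy
    rw [interior_Ioo] at hy
    exact S.hellincr θ hθ y hy.1 hy.2
  have anti1 : StrictAntiOn (fun y => ell S.ε S.b S.σ S.c S.π y θ) (Ici (S.xhat θ)) := by
    apply strictAntiOn_of_deriv_neg (convex_Ici _)
      (contℓ.mono fun t ht => lt_of_lt_of_le hxhp ht)
    intro y hy
    rw [interior_Ici] at hy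
    exact S.helldecr θ hθ y hy
  have shape : ∀ y ∈ Ioo (0:ℝ) β',
      ell S.ε S.b S.σ S.c S.π β' θ ≤ ell S.ε S.b S.σ S.c S.π y θ := by
    intro y hy
    rcases lt_or_ge y (S.xhat θ) with hcase | hcase
    · rw [hβ'val]
      apply le_of_tendsto (S.helllim0 θ hθ)
      filter_upwards [Ioo_mem_nhdsGT_of_mem (⟨le_rfl, hy.1⟩ : (0:ℝ) ∈ Ico 0 y)] with z hz
      exact (mono1 ⟨hz.1, lt_trans hz.2 hcase⟩ ⟨hy.1, hcase⟩ hz.2).le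
    · exact (anti1 hcase (le_trans hcase hy.2.le) hy.2).le
  have hmem : β' ∈ S.Bset φ θ := by
    refine ⟨hβ'pos, fun x hx hxle => ?_⟩
    rcases eq_or_lt_of_le hxle with rfl | hxlt
    · rw [(hφ x θ hβ'pos hθ).2.2 x le_rfl]
    · obtain ⟨F, E, hFcont, hFβ, hsign, hFderiv⟩ :=
        aux_integrating_factor S hβ'pos hθ (hφ β' θ hβ'pos hθ) hx hxlt
      have hanti : AntitoneOn F (Icc x β') := by
        apply antitoneOn_of_deriv_nonpos (convex_Icc _ _) hFcont
        · rw [interior_Icc]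
          exact fun z hz => ((hFderiv z hz).2.differentiableAt).differentiableWithinAt
        · intro z hz
          rw [interior_Icc] at hz
          obtain ⟨hE, hD⟩ := hFderiv z hz
          rw [hD.deriv]
          exact mul_nonpos_of_nonneg_of_nonpos hE.le
            (sub_nonpos.mpr (shape z ⟨lt_trans hx hz.1, hz.2⟩))
      have h0 : 0 ≤ F x := by
        have h := hanti ⟨le_rfl, hxlt.le⟩ ⟨hxlt.le, le_rfl⟩ hxlt.le
        rw [hFβ] at h
        exact h
      have := ((hsign x ⟨le_rfl, hxlt.le⟩).2).mp h0
      linarith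
  exact le_csInf ⟨β', hmem⟩ hlb
end
end

section
/- Let f be continuously differentiable on (α,β) and fix x ∈ (α,β). Suppose the set {y ∈ (α,x) : f(y) = f(x)} is nonempty and let ȳ be its supremum, and/or the set {y ∈ (x,β) : f(y) = f(x)} is nonempty and let y̲ be its infimum. If f'(x) > 0 then f'(ȳ) ≤ 0 and f'(y̲) ≤ 0; if f'(x) < 0 then f'(ȳ) ≥ 0 and f'(y̲) ≥ 0. -/
open Set Filter Topology

private lemma slope_pos_gt {f : ℝ → ℝ} {u v : ℝ} (h : 0 < slope f u v) (huv : u < v) :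
    f u < f v := by
  have h2 := mul_pos h (sub_pos.mpr huv)
  rw [slope_def_field, div_mul_cancel₀ _ (sub_ne_zero.mpr (ne_of_gt huv))] at h2
  linarith

private lemma slope_pos_lt {f : ℝ → ℝ} {u v : ℝ} (h : 0 < slope f u v) (hvu : v < u) :
    f v < f u := by
  rw [slope_comm] at h
  exact slope_pos_gt h hvu

private lemma left_pos (α β : ℝ) (f : ℝ → ℝ) (hf : ContDiffOn ℝ 1 f (Ioo α β)) (x : ℝ)
    (hx : x ∈ Ioo α β) (hd : 0 < deriv f x)
    (hne : {y ∈ Ioo α x | f y = f x}.Nonempty) :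
    deriv f (sSup {y ∈ Ioo α x | f y = f x}) ≤ 0 := by
  set S := {y ∈ Ioo α x | f y = f x} with hS
  obtain ⟨y₀, hy₀⟩ := hne
  have hbdd : BddAbove S := ⟨x, fun y hy => hy.1.2.le⟩
  set Y := sSup S with hY
  have hy₀Y : y₀ ≤ Y := le_csSup hbdd hy₀
  have hdiff : ∀ z ∈ Ioo α β, HasDerivAt f (deriv f z) z := fun z hz =>
    ((hf.differentiableOn one_ne_zero).differentiableAt (isOpen_Ioo.mem_nhds hz)).hasDerivAt
  -- slope positivity near x
  have hslx : ∀ᶠ y in 𝓝[≠] x, 0 < slope f x y :=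
    (hasDerivAt_iff_tendsto_slope.mp (hdiff x hx)).eventually (eventually_gt_nhds hd)
  -- elements of S are bounded away from x
  obtain ⟨ε, hε, hball⟩ : ∃ ε > 0, ∀ y, y ≠ x → |y - x| < ε → 0 < slope f x y := by
    rw [eventually_nhdsWithin_iff] at hslx
    obtain ⟨ε, hε, hb⟩ := Metric.eventually_nhds_iff.mp hslx
    exact ⟨ε, hε, fun y hy hdist => hb (by simpa [Real.dist_eq] using hdist) hy⟩
  have hYle : Y ≤ x - ε := by
    apply csSup_le ⟨y₀, hy₀⟩
    intro y hy
    by_contra hc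
    push_neg at hc
    have hyx : y ≠ x := ne_of_lt hy.1.2
    have h0 := hball y hyx (by rw [abs_sub_lt_iff]; constructor <;> linarith [hy.1.2])
    rw [slope_def_field, hy.2, sub_self, zero_div] at h0
    exact lt_irrefl 0 h0
  have hYx : Y < x := lt_of_le_of_lt hYle (by linarith)
  have hYmem : Y ∈ Ioo α β := ⟨lt_of_lt_of_le hy₀.1.1 hy₀Y, lt_trans hYx hx.2⟩
  -- f Y = f x
  have hfY : f Y = f x := by
    have hcl : Y ∈ closure S := (isLUB_csSup ⟨y₀, hy₀⟩ hbdd).mem_closure ⟨y₀, hy₀⟩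
    have hnb : (𝓝[S] Y).NeBot := mem_closure_iff_nhdsWithin_neBot.mp hcl
    have hcont : ContinuousAt f Y :=
      (hf.continuousOn.continuousAt (isOpen_Ioo.mem_nhds hYmem))
    have h1 : Tendsto f (𝓝[S] Y) (𝓝 (f Y)) :=
      hcont.continuousWithinAt.tendsto
    have h2 : Tendsto f (𝓝[S] Y) (𝓝 (f x)) :=
      tendsto_nhdsWithin_congr (fun y hy => hy.2.symm) tendsto_const_nhds
    exact tendsto_nhds_unique h1 h2
  -- contradiction argument
  by_contra hcon
  push_neg at hcon
  have hslY : ∀ᶠ y in 𝓝[≠] Y, 0 < slope f Y y :=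
    (hasDerivAt_iff_tendsto_slope.mp (hdiff Y hYmem)).eventually (eventually_gt_nhds hcon)
  have hslY' : ∀ᶠ y in 𝓝[>] Y, 0 < slope f Y y :=
    hslY.filter_mono (nhdsWithin_mono _ (fun y hy => ne_of_gt hy))
  have hmemI : Ioo Y x ∈ 𝓝[>] Y := Ioo_mem_nhdsGT_of_mem ⟨le_refl _, hYx⟩
  obtain ⟨a, hsa, haI⟩ := (hslY'.and (eventually_of_mem hmemI (fun y hy => hy))).exists
  have hfa : f x < f a := hfY ▸ slope_pos_gt hsa haI.1
  have hslx' : ∀ᶠ y in 𝓝[<] x, 0 < slope f x y :=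
    hslx.filter_mono (nhdsWithin_mono _ (fun y hy => ne_of_lt hy))
  have hmemI2 : Ioo a x ∈ 𝓝[<] x := Ioo_mem_nhdsLT_of_mem ⟨haI.2, le_refl _⟩
  obtain ⟨b, hsb, hbI⟩ := (hslx'.and (eventually_of_mem hmemI2 (fun y hy => hy))).exists
  have hfb : f b < f x := slope_pos_lt hsb hbI.2
  -- IVT on [a, b]
  have hab : a ≤ b := hbI.1.le
  have hsub : Icc a b ⊆ Ioo α β := fun z hz =>
    ⟨lt_of_lt_of_le (lt_of_lt_of_le hYmem.1 (le_of_lt haI.1)) hz.1,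
     lt_trans (lt_of_le_of_lt hz.2 hbI.2) hx.2⟩
  have hivt := intermediate_value_Icc' hab (hf.continuousOn.mono hsub)
  obtain ⟨c, hcI, hfc⟩ := hivt ⟨hfb.le, hfa.le⟩
  have hcS : c ∈ S := ⟨⟨lt_of_lt_of_le (lt_of_lt_of_le hYmem.1 (le_of_lt haI.1)) hcI.1,
    lt_of_le_of_lt hcI.2 hbI.2⟩, hfc⟩
  have : c ≤ Y := le_csSup hbdd hcS
  have : Y < c := lt_of_lt_of_le haI.1 hcI.1
  linarith

private lemma right_pos (α β : ℝ) (f : ℝ → ℝ) (hf : ContDiffOn ℝ 1 f (Ioo α β)) (x : ℝ)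
    (hx : x ∈ Ioo α β) (hd : 0 < deriv f x)
    (hne : {y ∈ Ioo x β | f y = f x}.Nonempty) :
    deriv f (sInf {y ∈ Ioo x β | f y = f x}) ≤ 0 := by
  set S := {y ∈ Ioo x β | f y = f x} with hS
  obtain ⟨y₀, hy₀⟩ := hne
  have hbdd : BddBelow S := ⟨x, fun y hy => hy.1.1.le⟩
  set Y := sInf S with hY
  have hy₀Y : Y ≤ y₀ := csInf_le hbdd hy₀
  have hdiff : ∀ z ∈ Ioo α β, HasDerivAt f (deriv f z) z := fun z hz =>
    ((hf.differentiableOn one_ne_zero).differentiableAt (isOpen_Ioo.mem_nhds hz)).hasDerivAt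
  have hslx : ∀ᶠ y in 𝓝[≠] x, 0 < slope f x y :=
    (hasDerivAt_iff_tendsto_slope.mp (hdiff x hx)).eventually (eventually_gt_nhds hd)
  obtain ⟨ε, hε, hball⟩ : ∃ ε > 0, ∀ y, y ≠ x → |y - x| < ε → 0 < slope f x y := by
    rw [eventually_nhdsWithin_iff] at hslx
    obtain ⟨ε, hε, hb⟩ := Metric.eventually_nhds_iff.mp hslx
    exact ⟨ε, hε, fun y hy hdist => hb (by simpa [Real.dist_eq] using hdist) hy⟩
  have hYge : x + ε ≤ Y := by
    apply le_csInf ⟨y₀, hy₀⟩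
    intro y hy
    by_contra hc
    push_neg at hc
    have hyx : y ≠ x := ne_of_gt hy.1.1
    have h0 := hball y hyx (by rw [abs_sub_lt_iff]; constructor <;> linarith [hy.1.1])
    rw [slope_def_field, hy.2, sub_self, zero_div] at h0
    exact lt_irrefl 0 h0
  have hYx : x < Y := lt_of_lt_of_le (by linarith) hYge
  have hYmem : Y ∈ Ioo α β := ⟨lt_trans hx.1 hYx, lt_of_le_of_lt hy₀Y hy₀.1.2⟩
  have hfY : f Y = f x := by
    have hcl : Y ∈ closure S := (isGLB_csInf ⟨y₀, hy₀⟩ hbdd).mem_closure ⟨y₀, hy₀⟩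
    have hnb : (𝓝[S] Y).NeBot := mem_closure_iff_nhdsWithin_neBot.mp hcl
    have hcont : ContinuousAt f Y :=
      (hf.continuousOn.continuousAt (isOpen_Ioo.mem_nhds hYmem))
    have h1 : Tendsto f (𝓝[S] Y) (𝓝 (f Y)) := hcont.continuousWithinAt.tendsto
    have h2 : Tendsto f (𝓝[S] Y) (𝓝 (f x)) :=
      tendsto_nhdsWithin_congr (fun y hy => hy.2.symm) tendsto_const_nhds
    exact tendsto_nhds_unique h1 h2
  by_contra hcon
  push_neg at hcon
  have hslY : ∀ᶠ y in 𝓝[≠] Y, 0 < slope f Y y :=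
    (hasDerivAt_iff_tendsto_slope.mp (hdiff Y hYmem)).eventually (eventually_gt_nhds hcon)
  have hslY' : ∀ᶠ y in 𝓝[<] Y, 0 < slope f Y y :=
    hslY.filter_mono (nhdsWithin_mono _ (fun y hy => ne_of_lt hy))
  have hmemI : Ioo x Y ∈ 𝓝[<] Y := Ioo_mem_nhdsLT_of_mem ⟨hYx, le_refl _⟩
  obtain ⟨b, hsb, hbI⟩ := (hslY'.and (eventually_of_mem hmemI (fun y hy => hy))).exists
  have hfb : f b < f x := hfY ▸ slope_pos_lt hsb hbI.2
  have hslx' : ∀ᶠ y in 𝓝[>] x, 0 < slope f x y :=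
    hslx.filter_mono (nhdsWithin_mono _ (fun y hy => ne_of_gt hy))
  have hmemI2 : Ioo x b ∈ 𝓝[>] x := Ioo_mem_nhdsGT_of_mem ⟨le_refl _, hbI.1⟩
  obtain ⟨a, hsa, haI⟩ := (hslx'.and (eventually_of_mem hmemI2 (fun y hy => hy))).exists
  have hfa : f x < f a := slope_pos_gt hsa haI.1
  have hab : a ≤ b := haI.2.le
  have hsub : Icc a b ⊆ Ioo α β := fun z hz =>
    ⟨lt_of_lt_of_le (lt_trans hx.1 haI.1) hz.1,
     lt_of_le_of_lt hz.2 (lt_trans hbI.2 hYmem.2)⟩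
  have hivt := intermediate_value_Icc' hab (hf.continuousOn.mono hsub)
  obtain ⟨c, hcI, hfc⟩ := hivt ⟨hfb.le, hfa.le⟩
  have hcS : c ∈ S := ⟨⟨lt_of_lt_of_le haI.1 hcI.1,
    lt_trans (lt_of_le_of_lt hcI.2 hbI.2) hYmem.2⟩, hfc⟩
  have h1 : Y ≤ c := csInf_le hbdd hcS
  have h2 : c < Y := lt_of_le_of_lt hcI.2 hbI.2
  linarith


/-- elementary lemma on C¹ functions (Lemma A.1 of the paper). -/
theorem elementary_derivative_sign_lemma (α β : ℝ) (hαβ : α < β) (f : ℝ → ℝ)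
    (hf : ContDiffOn ℝ 1 f (Ioo α β)) (x : ℝ) (hx : x ∈ Ioo α β) :
    (0 < deriv f x →
      ({y ∈ Ioo α x | f y = f x}.Nonempty →
        deriv f (sSup {y ∈ Ioo α x | f y = f x}) ≤ 0) ∧
      ({y ∈ Ioo x β | f y = f x}.Nonempty →
        deriv f (sInf {y ∈ Ioo x β | f y = f x}) ≤ 0)) ∧
    (deriv f x < 0 →
      ({y ∈ Ioo α x | f y = f x}.Nonempty →
        0 ≤ deriv f (sSup {y ∈ Ioo α x | f y = f x})) ∧
      ({y ∈ Ioo x β | f y = f x}.Nonempty →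
        0 ≤ deriv f (sInf {y ∈ Ioo x β | f y = f x}))) := by
  constructor
  · intro hd
    exact ⟨fun hne => left_pos α β f hf x hx hd hne,
           fun hne => right_pos α β f hf x hx hd hne⟩
  · intro hd
    set g : ℝ → ℝ := fun y => -f y with hg
    have hgC : ContDiffOn ℝ 1 g (Ioo α β) := hf.neg
    have hgd : ∀ z, deriv g z = -deriv f z := fun z => deriv.neg
    have hdg : 0 < deriv g x := by rw [hgd]; linarith
    have hsetL : {y ∈ Ioo α x | g y = g x} = {y ∈ Ioo α x | f y = f x} := by
      ext y; simp [hg, neg_inj]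
    have hsetR : {y ∈ Ioo x β | g y = g x} = {y ∈ Ioo x β | f y = f x} := by
      ext y; simp [hg, neg_inj]
    constructor
    · intro hne
      have := left_pos α β g hgC x hx hdg (hsetL ▸ hne)
      rw [hsetL, hgd] at this
      linarith
    · intro hne
      have := right_pos α β g hgC x hx hdg (hsetR ▸ hne)
      rw [hsetR, hgd] at this
      linarith
end

section
/- Let θ > 0 and let α, η be real numbers with x̂_ε(θ) ≤ α < η. Then φ_α(x,θ) ≤ φ_η(x,θ) for every x > 0. -/
open Set Filter Topology MeasureTheory

noncomputable section

/-- Backward linear comparison: if `u' = q u + r` with `r < 0` on `(s,t)` and `u t ≥ 0`,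
then `u > 0` on `[s,t)`. -/
lemma lin_comparison {s t : ℝ} (hst : s < t) (u q r : ℝ → ℝ)
    (hu : ContinuousOn u (Icc s t))
    (hq : ContinuousOn q (Icc s t))
    (hderiv : ∀ x ∈ Ioo s t, HasDerivAt u (q x * u x + r x) x)
    (hr : ∀ x ∈ Ioo s t, r x < 0)
    (hut : 0 ≤ u t) :
    ∀ x ∈ Ico s t, 0 < u x := by
  set Q : ℝ → ℝ := fun x => ∫ z in s..x, q z with hQdef
  have hqint : IntervalIntegrable q volume s t :=
    (hq.mono (by rw [uIcc_of_le hst.le])).intervalIntegrable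
  have hQd : ∀ x ∈ Ioo s t, HasDerivAt Q (q x) x := by
    intro x hx
    have hmem : Icc s t ∈ 𝓝 x := Icc_mem_nhds hx.1 hx.2
    have hsub : IntervalIntegrable q volume s x := by
      apply hqint.mono_set
      rw [uIcc_of_le hx.1.le, uIcc_of_le hst.le]
      exact Icc_subset_Icc le_rfl hx.2.le
    exact intervalIntegral.integral_hasDerivAt_right hsub
      ⟨Icc s t, hmem, hq.aestronglyMeasurable measurableSet_Icc⟩
      (hq.continuousAt hmem)
  have hQcont : ContinuousOn Q (Icc s t) := by
    rw [hQdef]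
    have := intervalIntegral.continuousOn_primitive_interval
      (μ := volume) (f := q) (a := s) (b := t)
      (by rw [uIcc_of_le hst.le]; exact hq.integrableOn_compact isCompact_Icc)
    rwa [uIcc_of_le hst.le] at this
  set w : ℝ → ℝ := fun x => u x * Real.exp (-(Q x)) with hwdef
  have hwd : ∀ x ∈ Ioo s t, HasDerivAt w (r x * Real.exp (-(Q x))) x := by
    intro x hx
    have hE : HasDerivAt (fun y => Real.exp (-(Q y))) (Real.exp (-(Q x)) * (-(q x))) x := by
      have := ((hQd x hx).neg).exp
      simpa using this
    have := (hderiv x hx).mul hE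
    exact this.congr_deriv (by ring)
  have hwanti : StrictAntiOn w (Icc s t) := by
    apply strictAntiOn_of_deriv_neg (convex_Icc s t) (hu.mul ((hQcont.neg).rexp))
    intro x hx
    rw [interior_Icc] at hx
    rw [show deriv (u * fun y => Real.exp ((-Q) y)) x = deriv w x from rfl, (hwd x hx).deriv]
    exact mul_neg_of_neg_of_pos (hr x hx) (Real.exp_pos _)
  intro x hx
  have h1 : w t < w x := hwanti ⟨hx.1, hx.2.le⟩ (right_mem_Icc.2 hst.le) hx.2
  have h2 : 0 ≤ w t := mul_nonneg hut (Real.exp_pos _).le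
  have h3 : 0 < u x * Real.exp (-(Q x)) := lt_of_le_of_lt h2 h1
  nlinarith [Real.exp_pos (-(Q x))]

/-- comparison principle with respect to the boundary point:
if `x̂_ε(θ) ≤ α < η` then `φ_α(·,θ) ≤ φ_η(·,θ)` on `(0,∞)`. -/
theorem comparison_in_boundary_point (S : Setting) (φ : ℝ → ℝ → ℝ → ℝ)
    (hφ : ∀ β θ : ℝ, 0 < β → 0 < θ → IsAuxSol S.ε S.b S.σ S.c S.π β θ 0 (φ β θ)) :
    ∀ θ : ℝ, 0 < θ → ∀ a η : ℝ, S.xhat θ ≤ a → a < η →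
      ∀ x : ℝ, 0 < x → φ a θ x ≤ φ η θ x := by
  intro θ hθ a η ha haη x hx
  have hxhat : 0 < S.xhat θ := S.hxhatpos θ hθ
  have ha0 : 0 < a := lt_of_lt_of_le hxhat ha
  have hη0 : 0 < η := ha0.trans haη
  obtain ⟨hgC1, hgode, hgbd⟩ := hφ η θ hη0 hθ
  obtain ⟨hfC1, hfode, hfbd⟩ := hφ a θ ha0 hθ
  set g := φ η θ with hgdef
  set f := φ a θ with hfdef
  -- continuity facts
  have hbc : ContinuousOn S.b (Ioi 0) := S.hb.continuousOn
  have hσc : ContinuousOn S.σ (Ioi 0) := S.hσ.continuousOn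
  have hcc : ContinuousOn S.c (Ioi 0) := S.hc.continuousOn
  have hπc : ContinuousOn (fun y => S.π y θ) (Ioi 0) := (S.hπC2 θ hθ).continuousOn
  have hdcc : ContinuousOn (deriv S.c) (Ioi 0) :=
    S.hc.continuousOn_deriv_of_isOpen isOpen_Ioi le_rfl
  have hgc : ContinuousOn g (Ioi 0) := hgC1.continuousOn
  have hfc : ContinuousOn f (Ioi 0) := hfC1.continuousOn
  have hellc : ContinuousOn (fun y => ell S.ε S.b S.σ S.c S.π y θ) (Ioi 0) := by
    unfold ell
    exact ((hbc.neg.mul hcc).add hπc).sub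
      ((continuousOn_const.mul (hσc.pow 2)).mul
        ((continuousOn_const.mul (hcc.pow 2)).add hdcc))
  have hIci : Ici (S.xhat θ) ⊆ Ioi (0:ℝ) := fun y hy => lt_of_lt_of_le hxhat hy
  have hanti : StrictAntiOn (fun y => ell S.ε S.b S.σ S.c S.π y θ) (Ici (S.xhat θ)) := by
    apply strictAntiOn_of_deriv_neg (convex_Ici _) (hellc.mono hIci)
    intro y hy
    rw [interior_Ici] at hy
    exact S.helldecr θ hθ y hy
  -- differentiability at points
  have hgdiff : ∀ y : ℝ, 0 < y → DifferentiableAt ℝ g y := fun y hy =>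
    ((hgC1.differentiableOn one_ne_zero) y hy).differentiableAt (Ioi_mem_nhds hy)
  have hfdiff : ∀ y : ℝ, 0 < y → DifferentiableAt ℝ f y := fun y hy =>
    ((hfC1.differentiableOn one_ne_zero) y hy).differentiableAt (Ioi_mem_nhds hy)
  have hcdiff : ∀ y : ℝ, 0 < y → DifferentiableAt ℝ S.c y := fun y hy =>
    ((S.hc.differentiableOn one_ne_zero) y hy).differentiableAt (Ioi_mem_nhds hy)
  -- Part 1: g + c > 0 on [a, η)
  have key1 : ∀ y ∈ Ico a η, 0 < g y + S.c y := by
    have hsub : Icc a η ⊆ Ioi (0:ℝ) := fun y hy => lt_of_lt_of_le ha0 hy.1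
    apply lin_comparison haη (fun y => g y + S.c y)
      (fun y => S.ε * (g y - S.c y) - 2 * S.b y / (S.σ y) ^ 2)
      (fun y => 2 * (ell S.ε S.b S.σ S.c S.π η θ - ell S.ε S.b S.σ S.c S.π y θ) / (S.σ y) ^ 2)
    · exact (hgc.mono hsub).add (hcc.mono hsub)
    · apply ContinuousOn.sub (continuousOn_const.mul ((hgc.mono hsub).sub (hcc.mono hsub)))
      apply ContinuousOn.div (continuousOn_const.mul (hbc.mono hsub)) ((hσc.mono hsub).pow 2)
      intro y hy
      exact pow_ne_zero 2 (ne_of_gt (S.hσpos y (hsub hy)))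
    · intro y hy
      have hy0 : 0 < y := ha0.trans hy.1
      have hσy : S.σ y ≠ 0 := ne_of_gt (S.hσpos y hy0)
      have heq := hgode y ⟨hy0, hy.2⟩
      have hd := ((hgdiff y hy0).hasDerivAt).add ((hcdiff y hy0).hasDerivAt)
      refine hd.congr_deriv (Eq.symm ?_)
      unfold ell at heq ⊢
      field_simp
      linear_combination (-2) * heq
    · intro y hy
      have hy0 : 0 < y := ha0.trans hy.1
      have hlt : ell S.ε S.b S.σ S.c S.π η θ < ell S.ε S.b S.σ S.c S.π y θ :=
        hanti (le_trans ha hy.1.le) (le_trans ha haη.le) hy.2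
      apply div_neg_of_neg_of_pos
      · linarith
      · exact pow_pos (S.hσpos y hy0) 2
    · rw [hgbd η le_rfl]; ring_nf; exact le_rfl
  -- Part 2: f x ≤ g x
  rcases le_or_gt η x with hcase | hcase
  · rw [hgbd x hcase, hfbd x (le_trans haη.le hcase)]
  rcases le_or_gt a x with hcase2 | hcase2
  · rw [hfbd x hcase2]
    have := key1 x ⟨hcase2, hcase⟩
    linarith
  · -- x < a : compare the two ODE solutions on [x, a]
    have hua : 0 ≤ g a - f a := by
      rw [hfbd a le_rfl]
      have := key1 a ⟨le_rfl, haη⟩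
      linarith
    have hsub : Icc x a ⊆ Ioi (0:ℝ) := fun y hy => lt_of_lt_of_le hx hy.1
    have key2 := lin_comparison hcase2 (fun y => g y - f y)
      (fun y => S.ε * (g y + f y) - 2 * S.b y / (S.σ y) ^ 2)
      (fun y => 2 * (ell S.ε S.b S.σ S.c S.π η θ - ell S.ε S.b S.σ S.c S.π a θ) / (S.σ y) ^ 2)
      ((hgc.mono hsub).sub (hfc.mono hsub))
      (by
        apply ContinuousOn.sub (continuousOn_const.mul ((hgc.mono hsub).add (hfc.mono hsub)))
        apply ContinuousOn.div (continuousOn_const.mul (hbc.mono hsub)) ((hσc.mono hsub).pow 2)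
        intro y hy
        exact pow_ne_zero 2 (ne_of_gt (S.hσpos y (hsub hy))))
      (by
        intro y hy
        have hy0 : 0 < y := hx.trans hy.1
        have hσy : S.σ y ≠ 0 := ne_of_gt (S.hσpos y hy0)
        have heqg := hgode y ⟨hy0, lt_trans hy.2 haη⟩
        have heqf := hfode y ⟨hy0, hy.2⟩
        have hd := ((hgdiff y hy0).hasDerivAt).sub ((hfdiff y hy0).hasDerivAt)
        refine hd.congr_deriv (Eq.symm ?_)
        field_simp
        linear_combination (-2) * heqg + 2 * heqf)
      (by
        intro y hy
        have hy0 : 0 < y := hx.trans hy.1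
        have hlt : ell S.ε S.b S.σ S.c S.π η θ < ell S.ε S.b S.σ S.c S.π a θ :=
          hanti ha (le_trans ha haη.le) haη
        apply div_neg_of_neg_of_pos
        · linarith
        · exact pow_pos (S.hσpos y hy0) 2)
      hua
      x (left_mem_Ico.2 hcase2)
    linarith
end
end

section
/- For every fixed θ > 0, β ≥ x̂_ε(θ) and y ∈ (0,β), one has lim_{δ↓0} |φ_{β+δ}(y,θ) − φ_β(y,θ)| = 0; i.e., the solutions of the auxiliary boundary-value problem depend continuously (from the right) on the boundary point β at each interior point. -/
open Set Filter Topology MeasureTheory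

noncomputable section

lemma final_algebra_aux {e A uy wy κ η m : ℝ} (he : 0 < e) (hA : uy/2 ≤ A) (huy : 0 < uy)
    (hm : 0 ≤ m) (hnumb : e * A * uy * m < κ * (|wy| + uy))
    (hκb : κ * (2*(|wy| + uy)+1) ≤ η * e * uy^2) (hκpos : 0 < κ) : m < η := by
  nlinarith [mul_le_mul_of_nonneg_right hA (mul_nonneg (mul_nonneg he.le huy.le) hm),
    mul_pos (mul_pos he huy) huy, abs_nonneg wy]

/-- If `F` is continuous at `a` and vanishes on a punctured neighborhood of `a`,
then `F a = 0`. -/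
lemma aux_vanish_of_punctured {F : ℝ → ℝ} {a : ℝ} (hc : ContinuousAt F a)
    (h : ∀ᶠ t in nhdsWithin a {a}ᶜ, F t = 0) : F a = 0 := by
  have h1 : Tendsto F (nhdsWithin a {a}ᶜ) (nhds (F a)) := hc.continuousWithinAt
  have h2 : Tendsto F (nhdsWithin a {a}ᶜ) (nhds 0) :=
    Tendsto.congr' (h.mono fun t ht => ht.symm) tendsto_const_nhds
  exact tendsto_nhds_unique h1 h2

set_option maxHeartbeats 3200000 in
/-- right-continuity of `β ↦ φ_β(y,θ)` at every interior point `y`. -/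
theorem continuity_in_boundary_point (S : Setting) (φ : ℝ → ℝ → ℝ → ℝ)
    (hφ : ∀ β θ : ℝ, 0 < β → 0 < θ → IsAuxSol S.ε S.b S.σ S.c S.π β θ 0 (φ β θ))
    (x₀ : ℝ) (hx₀ : 0 < x₀)
    (hspeed : ∀ x : ℝ, 0 < x →
      IntegrableOn (fun y => 2 / ((S.σ y) ^ 2 * S.scaleD x₀ y)) (Ioo 0 x)) :
    ∀ θ : ℝ, 0 < θ → ∀ β : ℝ, S.xhat θ ≤ β → ∀ y ∈ Ioo (0 : ℝ) β,
      Tendsto (fun δ => |φ (β + δ) θ y - φ β θ y|) (nhdsWithin 0 (Ioi 0)) (nhds 0) := by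
  intro θ hθ β hβ y hy
  obtain ⟨hy0, hyβ⟩ := hy
  have hβ0 : 0 < β := lt_of_lt_of_le (S.hxhatpos θ hθ) hβ
  have hε : 0 < S.ε := S.hε
  -- continuity of the data on `(0,∞)`
  have hbC : ContinuousOn S.b (Ioi 0) := S.hb.continuousOn
  have hσC : ContinuousOn S.σ (Ioi 0) := S.hσ.continuousOn
  have hcC : ContinuousOn S.c (Ioi 0) := S.hc.continuousOn
  have hc'C : ContinuousOn (deriv S.c) (Ioi 0) :=
    S.hc.continuousOn_deriv_of_isOpen isOpen_Ioi le_rfl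
  have hπC : ContinuousOn (fun x => S.π x θ) (Ioi 0) := (S.hπC2 θ hθ).continuousOn
  set L : ℝ → ℝ := fun t => ell S.ε S.b S.σ S.c S.π t θ with hLdef
  have hLa : ∀ t, L t = ell S.ε S.b S.σ S.c S.π t θ := fun t => by rw [hLdef]
  have hLC : ContinuousOn L (Ioi 0) := by
    rw [hLdef]; unfold ell
    exact ((hbC.neg.mul hcC).add hπC).sub
      ((continuousOn_const.mul (hσC.pow 2)).mul
        ((continuousOn_const.mul (hcC.pow 2)).add hc'C))
  -- basic facts about the solutions
  have hsol : ∀ d : ℝ, 0 ≤ d → IsAuxSol S.ε S.b S.σ S.c S.π (β + d) θ 0 (φ (β + d) θ) :=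
    fun d hd => hφ (β + d) θ (by linarith) hθ
  have hψC : ∀ d : ℝ, 0 ≤ d → ContinuousOn (φ (β + d) θ) (Ioi 0) :=
    fun d hd => (hsol d hd).1.continuousOn
  have hψ'C : ∀ d : ℝ, 0 ≤ d → ContinuousOn (deriv (φ (β + d) θ)) (Ioi 0) :=
    fun d hd => (hsol d hd).1.continuousOn_deriv_of_isOpen isOpen_Ioi le_rfl
  have hψdiff : ∀ d : ℝ, 0 ≤ d → ∀ x ∈ Ioi (0:ℝ),
      HasDerivAt (φ (β + d) θ) (deriv (φ (β + d) θ) x) x := fun d hd x hx =>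
    (((hsol d hd).1.differentiableOn one_ne_zero).differentiableAt (isOpen_Ioi.mem_nhds hx)).hasDerivAt
  have hbc : ∀ d : ℝ, 0 ≤ d → ∀ x : ℝ, β + d ≤ x → φ (β + d) θ x = -(S.c x) :=
    fun d hd => (hsol d hd).2.2
  have hric : ∀ d : ℝ, 0 ≤ d → ∀ x ∈ Ioo (0:ℝ) (β + d),
      (1/2) * S.σ x ^ 2 * deriv (φ (β + d) θ) x + S.b x * φ (β + d) θ x
        - (S.ε/2) * S.σ x ^ 2 * (φ (β + d) θ x) ^ 2 = L (β + d) - S.π x θ := by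
    intro d hd x hx
    have h := (hsol d hd).2.1 x hx
    rw [hLa]
    linarith
  -- Lemma A : the Riccati-type identity on all of `(0,∞)`
  have lemA : ∀ d : ℝ, 0 ≤ d → ∀ x ∈ Ioi (0:ℝ),
      (1/2) * S.σ x ^ 2 * deriv (φ (β + d) θ) x + S.b x * φ (β + d) θ x
        - (S.ε/2) * S.σ x ^ 2 * (φ (β + d) θ x) ^ 2 = L (max x (β + d)) - S.π x θ := by
    intro d hd
    have hT : (0:ℝ) < β + d := by linarith
    set F : ℝ → ℝ := fun x => (1/2) * S.σ x ^ 2 * deriv (φ (β + d) θ) x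
        + S.b x * φ (β + d) θ x - (S.ε/2) * S.σ x ^ 2 * (φ (β + d) θ x) ^ 2
        - (L (max x (β + d)) - S.π x θ) with hFdef
    suffices hF : ∀ x ∈ Ioi (0:ℝ), F x = 0 by
      intro x hx
      have h := hF x hx
      rw [hFdef] at h
      simp only at h
      linarith
    have hmaxC : ContinuousOn (fun x => L (max x (β + d))) (Ioi 0) :=
      hLC.comp ((continuous_id.max continuous_const).continuousOn)
        (fun x _ => lt_of_lt_of_le hT (le_max_right x (β + d)))
    have hFC : ContinuousOn F (Ioi 0) := by
      rw [hFdef]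
      exact ((((continuousOn_const.mul (hσC.pow 2)).mul (hψ'C d hd)).add
        (hbC.mul (hψC d hd))).sub
        ((continuousOn_const.mul (hσC.pow 2)).mul ((hψC d hd).pow 2))).sub
        (hmaxC.sub hπC)
    have hF0 : ∀ x ∈ Ioi (0:ℝ), x ≠ β + d → F x = 0 := by
      intro x hx hne
      rcases lt_or_gt_of_ne hne with hlt | hgt
      · have h := hric d hd x ⟨hx, hlt⟩
        rw [hFdef]
        simp only
        rw [max_eq_right hlt.le]
        linarith
      · have hev : (φ (β + d) θ) =ᶠ[nhds x] fun t => -(S.c t) := by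
          filter_upwards [isOpen_Ioi.eventually_mem (show x ∈ Ioi (β + d) from hgt)] with t ht
          exact hbc d hd t ht.le
        have hdc : deriv (φ (β + d) θ) x = -(deriv S.c x) := by
          rw [hev.deriv_eq]; exact deriv.neg
        rw [hFdef]
        simp only
        rw [max_eq_left hgt.le, hbc d hd x hgt.le, hdc, hLa]
        unfold ell
        ring
    intro x hx
    rcases eq_or_ne x (β + d) with heq | hne
    · apply aux_vanish_of_punctured (hFC.continuousAt (isOpen_Ioi.mem_nhds hx))
      have hmem : Ioi (0:ℝ) ∈ nhdsWithin x {x}ᶜ := nhdsWithin_le_nhds (isOpen_Ioi.mem_nhds hx)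
      filter_upwards [hmem, self_mem_nhdsWithin] with t ht htne
      exact hF0 t ht (heq ▸ Set.mem_compl_singleton_iff.1 htne)
    · exact hF0 x hx hne
  -- the exponential transformation
  set U : ℝ → ℝ → ℝ :=
    fun d x => Real.exp (-(S.ε * ∫ t in (β + d)..x, φ (β + d) θ t)) with hUdef
  set W : ℝ → ℝ → ℝ := fun d x => -S.ε * φ (β + d) θ x * U d x with hWdef
  set DD : ℝ → ℝ → ℝ := fun d x =>
    (-S.ε * deriv (φ (β + d) θ) x + S.ε ^ 2 * (φ (β + d) θ x) ^ 2) * U d x with hDDdef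
  have hUpos : ∀ d x : ℝ, 0 < U d x := by
    intro d x; rw [hUdef]; exact Real.exp_pos _
  have hUder : ∀ d : ℝ, 0 ≤ d → ∀ x ∈ Ioi (0:ℝ), HasDerivAt (U d) (W d x) x := by
    intro d hd x hx
    have hsub : uIcc (β + d) x ⊆ Ioi (0:ℝ) := by
      intro t ht
      rw [Set.mem_uIcc] at ht
      rcases ht with ⟨h1, _⟩ | ⟨h1, _⟩
      · simp only [mem_Ioi]; linarith
      · exact lt_of_lt_of_le hx h1
    have hint : IntervalIntegrable (φ (β + d) θ) volume (β + d) x :=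
      ((hψC d hd).mono hsub).intervalIntegrable
    have hmeas := (hψC d hd).stronglyMeasurableAtFilter (μ := volume) isOpen_Ioi x hx
    have hca : ContinuousAt (φ (β + d) θ) x := (hψC d hd).continuousAt (isOpen_Ioi.mem_nhds hx)
    have hI := intervalIntegral.integral_hasDerivAt_right hint hmeas hca
    have h2 := ((hI.const_mul S.ε).neg).exp
    simp only [hUdef, hWdef]
    refine h2.congr_deriv ?_
    show Real.exp (-(S.ε * ∫ t in (β + d)..x, φ (β + d) θ t)) * -(S.ε * φ (β + d) θ x) = _
    ring
  have hWderiv : ∀ d : ℝ, 0 ≤ d → ∀ x ∈ Ioi (0:ℝ), HasDerivAt (W d) (DD d x) x := by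
    intro d hd x hx
    have h1 := ((hψdiff d hd x hx).const_mul (-S.ε)).mul (hUder d hd x hx)
    simp only [hWdef, hDDdef] at h1 ⊢
    refine h1.congr_deriv ?_
    ring
  -- the linear second-order equation with residual
  have hlin : ∀ d : ℝ, 0 ≤ d → ∀ lam : ℝ, ∀ x ∈ Ioi (0:ℝ),
      (1/2) * S.σ x ^ 2 * DD d x + S.b x * W d x + S.ε * (lam - S.π x θ) * U d x
        = S.ε * U d x * (lam - L (max x (β + d))) := by
    intro d hd lam x hx
    have h := lemA d hd x hx
    simp only [hWdef, hDDdef]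
    linear_combination (-S.ε * U d x) * h
  -- compact bounds
  have hJsub : Icc y (β + 1) ⊆ Ioi (0:ℝ) := fun t ht => lt_of_lt_of_le hy0 ht.1
  have hJβsub : Icc β (β + 1) ⊆ Ioi (0:ℝ) := fun t ht => lt_of_lt_of_le hβ0 ht.1
  obtain ⟨Mb0, hMb0⟩ := isCompact_Icc.exists_bound_of_continuousOn (hbC.mono hJsub)
  set Mb := max Mb0 0 with hMbdef
  have hMb : ∀ x ∈ Icc y (β + 1), |S.b x| ≤ Mb := fun x hx =>
    le_trans (by simpa [Real.norm_eq_abs] using hMb0 x hx) (le_max_left _ _)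
  have hMbnn : 0 ≤ Mb := le_max_right _ _
  have hσinvC : ContinuousOn (fun x => 2 / S.σ x ^ 2) (Icc y (β + 1)) :=
    continuousOn_const.div ((hσC.mono hJsub).pow 2)
      (fun x hx => pow_ne_zero 2 (S.hσpos x (hJsub hx)).ne')
  obtain ⟨Cσ0, hCσ0⟩ := isCompact_Icc.exists_bound_of_continuousOn hσinvC
  set Cσ := max Cσ0 0 with hCσdef
  have hCσ : ∀ x ∈ Icc y (β + 1), 2 / S.σ x ^ 2 ≤ Cσ := by
    intro x hx
    have h := hCσ0 x hx
    rw [Real.norm_eq_abs] at h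
    exact le_trans (le_trans (le_abs_self _) h) (le_max_left _ _)
  have hCσnn : 0 ≤ Cσ := le_max_right _ _
  obtain ⟨MPi0, hMPi0⟩ := isCompact_Icc.exists_bound_of_continuousOn (hπC.mono hJsub)
  set MPi := max MPi0 0 with hMPidef
  have hMPi : ∀ x ∈ Icc y (β + 1), |S.π x θ| ≤ MPi := fun x hx =>
    le_trans (by simpa [Real.norm_eq_abs] using hMPi0 x hx) (le_max_left _ _)
  have hMPinn : 0 ≤ MPi := le_max_right _ _
  obtain ⟨ML0, hML0⟩ := isCompact_Icc.exists_bound_of_continuousOn (hLC.mono hJβsub)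
  set ML := max ML0 0 with hMLdef
  have hML : ∀ x ∈ Icc β (β + 1), |L x| ≤ ML := fun x hx =>
    le_trans (by simpa [Real.norm_eq_abs] using hML0 x hx) (le_max_left _ _)
  have hMLnn : 0 ≤ ML := le_max_right _ _
  have hU0C : ContinuousOn (U 0) (Icc y (β + 1)) := fun x hx =>
    ((hUder 0 le_rfl x (hJsub hx)).continuousAt).continuousWithinAt
  obtain ⟨Mu0, hMu0⟩ := isCompact_Icc.exists_bound_of_continuousOn hU0C
  set Mu := max Mu0 0 with hMudef
  have hMu : ∀ x ∈ Icc y (β + 1), |U 0 x| ≤ Mu := fun x hx =>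
    le_trans (by simpa [Real.norm_eq_abs] using hMu0 x hx) (le_max_left _ _)
  have hMunn : 0 ≤ Mu := le_max_right _ _
  set K := 1 + Cσ * (Mb + S.ε * (ML + MPi)) with hKdef
  have hK1 : 1 ≤ K := by
    have h1 : 0 ≤ Cσ * (Mb + S.ε * (ML + MPi)) :=
      mul_nonneg hCσnn (add_nonneg hMbnn (mul_nonneg hε.le (add_nonneg hMLnn hMPinn)))
    linarith
  have hK0 : (0:ℝ) < K := by linarith
  -- values at β
  have hU0β : U 0 β = 1 := by rw [hUdef]; simp
  have hψ0β : φ (β + 0) θ β = -(S.c β) := hbc 0 le_rfl β (by linarith)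
  have hW0β : W 0 β = S.ε * S.c β := by
    simp only [hWdef]; rw [hψ0β, hU0β]; ring
  have hLβ : ContinuousAt L β := hLC.continuousAt (isOpen_Ioi.mem_nhds hβ0)
  have hU0cβ : ContinuousAt (U 0) β := (hUder 0 le_rfl β hβ0).continuousAt
  have hW0cβ : ContinuousAt (W 0) β := (hWderiv 0 le_rfl β hβ0).continuousAt
  have hccβ : ContinuousAt S.c β := hcC.continuousAt (isOpen_Ioi.mem_nhds hβ0)
  -- the ε-δ argument
  rw [Metric.tendsto_nhdsWithin_nhds]
  intro η hη
  have huy : 0 < U 0 y := hUpos 0 y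
  set uy := U 0 y with huydef
  set wy := W 0 y with hwydef
  set κ := min (uy/2) (η * S.ε * uy ^ 2 / (2 * (|wy| + uy) + 1)) with hκdef
  have hden : (0:ℝ) < 2 * (|wy| + uy) + 1 := by
    have := abs_nonneg wy; linarith
  have hκpos : 0 < κ := lt_min (by linarith) (by positivity)
  have hκle : κ ≤ uy/2 := min_le_left _ _
  have hκle2 : κ ≤ η * S.ε * uy ^ 2 / (2 * (|wy| + uy) + 1) := min_le_right _ _
  set Egr := Real.exp (K * (β + 1 - y)) with hEgrdef
  have hEgrpos : 0 < Egr := Real.exp_pos _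
  set D := (1 + 2 * Cσ * S.ε * Mu) * Egr with hDdef
  have hDaux : 0 ≤ 2 * Cσ * S.ε * Mu := by
    have := mul_nonneg (mul_nonneg (mul_nonneg (by norm_num : (0:ℝ) ≤ 2) hCσnn) hε.le) hMunn
    linarith
  have hDpos : 0 < D := by
    apply mul_pos _ hEgrpos; linarith
  set η₁ := κ / (D + 1) with hη₁def
  have hη₁pos : 0 < η₁ := div_pos hκpos (by linarith)
  obtain ⟨r₂, hr₂pos, hr₂⟩ := Metric.continuousAt_iff.1 hLβ η₁ hη₁pos
  obtain ⟨r₃, hr₃pos, hr₃⟩ := Metric.continuousAt_iff.1 hU0cβ η₁ hη₁pos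
  obtain ⟨r₄, hr₄pos, hr₄⟩ := Metric.continuousAt_iff.1 hW0cβ (η₁/2) (by linarith)
  obtain ⟨r₅, hr₅pos, hr₅⟩ := Metric.continuousAt_iff.1 hccβ (η₁/(2 * S.ε)) (by positivity)
  refine ⟨min 1 (min r₂ (min r₃ (min r₄ r₅))), by positivity, ?_⟩
  intro d hd hddist
  have hd0 : 0 < d := hd
  rw [Real.dist_eq, sub_zero, abs_of_pos hd0] at hddist
  have hd1 : d < 1 := lt_of_lt_of_le hddist (min_le_left _ _)
  have hdr₂ : d < r₂ := lt_of_lt_of_le hddist (le_trans (min_le_right _ _) (min_le_left _ _))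
  have hdr₃ : d < r₃ := lt_of_lt_of_le hddist
    (le_trans (min_le_right _ _) (le_trans (min_le_right _ _) (min_le_left _ _)))
  have hdr₄ : d < r₄ := lt_of_lt_of_le hddist
    (le_trans (min_le_right _ _) (le_trans (min_le_right _ _)
      (le_trans (min_le_right _ _) (min_le_left _ _))))
  have hdr₅ : d < r₅ := lt_of_lt_of_le hddist
    (le_trans (min_le_right _ _) (le_trans (min_le_right _ _)
      (le_trans (min_le_right _ _) (min_le_right _ _))))
  have hTβ : β < β + d := by linarith
  have hT1 : β + d ≤ β + 1 := by linarith
  have hyT : y < β + d := by linarith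
  have hT0 : (0:ℝ) < β + d := by linarith
  -- the difference function for Grönwall, run backwards from β+d
  set g : ℝ → ℝ × ℝ := fun s =>
    (U d (β + d - s) - U 0 (β + d - s), W d (β + d - s) - W 0 (β + d - s)) with hgdef
  set gd : ℝ → ℝ × ℝ := fun s =>
    (W d (β + d - s) * (-1) - W 0 (β + d - s) * (-1),
     DD d (β + d - s) * (-1) - DD 0 (β + d - s) * (-1)) with hgddef
  have hgder : ∀ s : ℝ, β + d - s ∈ Ioi (0:ℝ) → HasDerivAt g (gd s) s := by
    intro s hs
    have hinner : HasDerivAt (fun s' : ℝ => β + d - s') (-1) s := (hasDerivAt_id s).const_sub _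
    have h1 := HasDerivAt.comp s (hUder d hd0.le _ hs) hinner
    have h2 := HasDerivAt.comp s (hUder 0 le_rfl _ hs) hinner
    have h3 := HasDerivAt.comp s (hWderiv d hd0.le _ hs) hinner
    have h4 := HasDerivAt.comp s (hWderiv 0 le_rfl _ hs) hinner
    simp only [hgdef, hgddef]
    exact (h1.sub h2).prodMk (h3.sub h4)
  have hgcont : ContinuousOn g (Icc 0 (β + d - y)) := by
    intro s hs
    have : β + d - s ∈ Ioi (0:ℝ) := by
      simp only [mem_Ioi]; have := hs.2; linarith
    exact ((hgder s this).continuousAt).continuousWithinAt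
  set P := 2 * Cσ * S.ε * Mu * η₁ with hPdef
  have hPnn : 0 ≤ P := by
    have := mul_nonneg hDaux hη₁pos.le; linarith [this]
  -- initial bound at s = 0
  have hUdT : U d (β + d) = 1 := by rw [hUdef]; simp
  have hψdT : φ (β + d) θ (β + d) = -(S.c (β + d)) := hbc d hd0.le _ le_rfl
  have hWdT : W d (β + d) = S.ε * S.c (β + d) := by
    simp only [hWdef]; rw [hψdT, hUdT]; ring
  have hdistTβ : dist (β + d) β = d := by
    rw [Real.dist_eq]; simp [abs_of_pos hd0]
  have c1 : |U 0 (β + d) - 1| < η₁ := by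
    have h := hr₃ (by rw [hdistTβ]; exact hdr₃)
    rwa [Real.dist_eq, hU0β] at h
  have c2 : |S.ε * S.c (β + d) - W 0 (β + d)| < η₁ := by
    have hc := hr₅ (by rw [hdistTβ]; exact hdr₅)
    rw [Real.dist_eq] at hc
    have hw := hr₄ (by rw [hdistTβ]; exact hdr₄)
    rw [Real.dist_eq, hW0β] at hw
    have e1 : |S.ε * S.c (β + d) - S.ε * S.c β| = S.ε * |S.c (β + d) - S.c β| := by
      rw [← mul_sub, abs_mul, abs_of_pos hε]
    have e2 : S.ε * |S.c (β + d) - S.c β| < η₁ / 2 := by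
      have h3 : S.ε * |S.c (β + d) - S.c β| < S.ε * (η₁ / (2 * S.ε)) :=
        mul_lt_mul_of_pos_left hc hε
      have h4 : S.ε * (η₁ / (2 * S.ε)) = η₁ / 2 := by field_simp
      linarith
    calc |S.ε * S.c (β + d) - W 0 (β + d)|
        ≤ |S.ε * S.c (β + d) - S.ε * S.c β| + |S.ε * S.c β - W 0 (β + d)| := abs_sub_le _ _ _
      _ < η₁ / 2 + η₁ / 2 := by
          rw [abs_sub_comm] at hw
          rw [e1]
          exact add_lt_add e2 hw
      _ = η₁ := by ring
  have hga : ‖g 0‖ ≤ η₁ := by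
    have hg0 : g 0 = (1 - U 0 (β + d), S.ε * S.c (β + d) - W 0 (β + d)) := by
      simp only [hgdef, sub_zero]
      rw [hUdT, hWdT]
    rw [hg0, Prod.norm_def]
    simp only [Real.norm_eq_abs]
    apply max_le
    · rw [abs_sub_comm]; exact c1.le
    · exact c2.le
  -- the Grönwall bound on the derivative
  have hbound : ∀ s ∈ Ico (0:ℝ) (β + d - y), ‖gd s‖ ≤ K * ‖g s‖ + P := by
    intro s hs
    obtain ⟨hs0, hsTy⟩ := hs
    set x := β + d - s with hxdef
    have hxy : y < x := by rw [hxdef]; linarith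
    have hx0 : (0:ℝ) < x := lt_trans hy0 hxy
    have hxT : x ≤ β + d := by rw [hxdef]; linarith
    have hxJ : x ∈ Icc y (β + 1) := ⟨hxy.le, le_trans hxT hT1⟩
    have hA := hlin d hd0.le (L (β + d)) x hx0
    rw [max_eq_right hxT, sub_self, mul_zero] at hA
    have hB := hlin 0 le_rfl (L (β + d)) x hx0
    simp only [add_zero] at hB
    -- the difference of the second derivatives
    have hσx2 : (0:ℝ) < S.σ x ^ 2 := pow_pos (S.hσpos x hx0) 2
    have hdiff : (1/2) * S.σ x ^ 2 * (DD d x - DD 0 x)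
        = (-(S.b x)) * (W d x - W 0 x)
          + (-(S.ε * (L (β + d) - S.π x θ))) * (U d x - U 0 x)
          + (-(S.ε * U 0 x)) * (L (β + d) - L (max x β)) := by
      linear_combination hA - hB
    have heq : DD d x - DD 0 x = 2 / S.σ x ^ 2 *
        ((-(S.b x)) * (W d x - W 0 x)
          + (-(S.ε * (L (β + d) - S.π x θ))) * (U d x - U 0 x)
          + (-(S.ε * U 0 x)) * (L (β + d) - L (max x β))) := by
      rw [div_mul_eq_mul_div, eq_div_iff hσx2.ne']
      linear_combination 2 * hdiff
    -- bound the pieces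
    have hg1 : (g s).1 = U d x - U 0 x := by
      rw [hxdef]
    have hg2 : (g s).2 = W d x - W 0 x := by
      rw [hxdef]
    have ha1 : |U d x - U 0 x| ≤ ‖g s‖ := by
      have h := norm_fst_le (g s)
      rwa [hg1, Real.norm_eq_abs] at h
    have ha2 : |W d x - W 0 x| ≤ ‖g s‖ := by
      have h := norm_snd_le (g s)
      rwa [hg2, Real.norm_eq_abs] at h
    have hGnn : 0 ≤ ‖g s‖ := norm_nonneg _
    have hLT : |L (β + d) - L β| < η₁ := by
      have h := hr₂ (by rw [hdistTβ]; exact hdr₂)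
      rwa [Real.dist_eq] at h
    have hLmax : |L (β + d) - L (max x β)| ≤ 2 * η₁ := by
      rcases le_or_gt x β with hxb | hxb
      · rw [max_eq_right hxb]; linarith [hLT]
      · rw [max_eq_left hxb.le]
        have hxr : dist x β < r₂ := by
          rw [Real.dist_eq, abs_of_pos (by linarith : (0:ℝ) < x - β)]
          linarith
        have h1 := hr₂ hxr
        rw [Real.dist_eq] at h1
        calc |L (β + d) - L x| ≤ |L (β + d) - L β| + |L β - L x| := abs_sub_le _ _ _
          _ ≤ η₁ + η₁ := by
              rw [abs_sub_comm (L β)]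
              exact add_le_add hLT.le h1.le
          _ = 2 * η₁ := by ring
    have hLTπ : |L (β + d) - S.π x θ| ≤ ML + MPi := by
      calc |L (β + d) - S.π x θ| ≤ |L (β + d)| + |S.π x θ| := abs_sub _ _
        _ ≤ ML + MPi := add_le_add (hML _ ⟨hTβ.le, hT1⟩) (hMPi x hxJ)
    have e1 : |(-(S.b x)) * (W d x - W 0 x)| ≤ Mb * ‖g s‖ := by
      rw [abs_mul, abs_neg]
      exact mul_le_mul (hMb x hxJ) ha2 (abs_nonneg _) hMbnn
    have e2 : |(-(S.ε * (L (β + d) - S.π x θ))) * (U d x - U 0 x)|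
        ≤ S.ε * (ML + MPi) * ‖g s‖ := by
      rw [abs_mul, abs_neg, abs_mul, abs_of_pos hε]
      exact mul_le_mul (mul_le_mul le_rfl hLTπ (abs_nonneg _) hε.le) ha1 (abs_nonneg _)
        (mul_nonneg hε.le (add_nonneg hMLnn hMPinn))
    have e3 : |(-(S.ε * U 0 x)) * (L (β + d) - L (max x β))| ≤ S.ε * Mu * (2 * η₁) := by
      rw [abs_mul, abs_neg, abs_mul, abs_of_pos hε]
      exact mul_le_mul (mul_le_mul le_rfl (hMu x hxJ) (abs_nonneg _) hε.le) hLmax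
        (abs_nonneg _) (mul_nonneg hε.le hMunn)
    have hsum : |(-(S.b x)) * (W d x - W 0 x)
          + (-(S.ε * (L (β + d) - S.π x θ))) * (U d x - U 0 x)
          + (-(S.ε * U 0 x)) * (L (β + d) - L (max x β))|
        ≤ (Mb + S.ε * (ML + MPi)) * ‖g s‖ + S.ε * Mu * (2 * η₁) := by
      calc |_ + _ + _| ≤ |(-(S.b x)) * (W d x - W 0 x)
            + (-(S.ε * (L (β + d) - S.π x θ))) * (U d x - U 0 x)|
            + |(-(S.ε * U 0 x)) * (L (β + d) - L (max x β))| := abs_add_le _ _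
        _ ≤ |(-(S.b x)) * (W d x - W 0 x)|
            + |(-(S.ε * (L (β + d) - S.π x θ))) * (U d x - U 0 x)|
            + |(-(S.ε * U 0 x)) * (L (β + d) - L (max x β))| := by
              linarith [abs_add_le ((-(S.b x)) * (W d x - W 0 x))
                ((-(S.ε * (L (β + d) - S.π x θ))) * (U d x - U 0 x))]
        _ ≤ Mb * ‖g s‖ + S.ε * (ML + MPi) * ‖g s‖ + S.ε * Mu * (2 * η₁) := by
              linarith
        _ = (Mb + S.ε * (ML + MPi)) * ‖g s‖ + S.ε * Mu * (2 * η₁) := by ring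
    have habs : |DD d x - DD 0 x|
        ≤ Cσ * ((Mb + S.ε * (ML + MPi)) * ‖g s‖ + S.ε * Mu * (2 * η₁)) := by
      rw [heq, abs_mul, abs_of_nonneg (by positivity : (0:ℝ) ≤ 2 / S.σ x ^ 2)]
      exact mul_le_mul (hCσ x hxJ) hsum (abs_nonneg _) hCσnn
    -- assemble
    have hgd1 : (gd s).1 = W d x * (-1) - W 0 x * (-1) := by
      rw [hxdef]
    have hgd2 : (gd s).2 = DD d x * (-1) - DD 0 x * (-1) := by
      rw [hxdef]
    rw [Prod.norm_def, hgd1, hgd2]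
    simp only [Real.norm_eq_abs]
    apply max_le
    · have : |W d x * (-1) - W 0 x * (-1)| = |W d x - W 0 x| := by
        rw [show W d x * (-1) - W 0 x * (-1) = -(W d x - W 0 x) by ring, abs_neg]
      rw [this]
      have h1 : ‖g s‖ ≤ K * ‖g s‖ := le_mul_of_one_le_left hGnn hK1
      linarith
    · have : |DD d x * (-1) - DD 0 x * (-1)| = |DD d x - DD 0 x| := by
        rw [show DD d x * (-1) - DD 0 x * (-1) = -(DD d x - DD 0 x) by ring, abs_neg]
      rw [this]
      have hKexp : Cσ * ((Mb + S.ε * (ML + MPi)) * ‖g s‖ + S.ε * Mu * (2 * η₁))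
          = (K - 1) * ‖g s‖ + P := by
        rw [hKdef, hPdef]; ring
      rw [hKexp] at habs
      linarith
  -- apply Grönwall
  have hTy0 : (0:ℝ) ≤ β + d - y := by linarith
  have key := norm_le_gronwallBound_of_norm_deriv_right_le hgcont
    (fun s hs => (hgder s (by simp only [mem_Ioi]; have := hs.2; linarith)).hasDerivWithinAt)
    hga hbound (β + d - y) ⟨hTy0, le_rfl⟩
  rw [gronwallBound_of_K_ne_0 hK0.ne'] at key
  simp only at key
  have hexp1 : Real.exp (K * (β + d - y - 0)) ≤ Egr := by
    rw [hEgrdef]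
    apply Real.exp_le_exp.2
    apply mul_le_mul_of_nonneg_left _ hK0.le
    linarith
  have hexppos : (0:ℝ) < Real.exp (K * (β + d - y - 0)) := Real.exp_pos _
  have hterm1 : η₁ * Real.exp (K * (β + d - y - 0)) ≤ η₁ * Egr :=
    mul_le_mul_of_nonneg_left hexp1 hη₁pos.le
  have hterm2 : P / K * (Real.exp (K * (β + d - y - 0)) - 1) ≤ P * Egr := by
    have h1 : Real.exp (K * (β + d - y - 0)) - 1 ≤ Egr := by linarith
    calc P / K * (Real.exp (K * (β + d - y - 0)) - 1) ≤ P / K * Egr :=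
          mul_le_mul_of_nonneg_left h1 (div_nonneg hPnn hK0.le)
      _ ≤ P * Egr := mul_le_mul_of_nonneg_right (div_le_self hPnn hK1) hEgrpos.le
  have hDeq : η₁ * Egr + P * Egr = D * η₁ := by
    rw [hDdef, hPdef]; ring
  have hDκ : D * η₁ < κ := by
    rw [hη₁def]
    have h1 : D * (κ / (D + 1)) = κ * (D / (D + 1)) := by ring
    rw [h1]
    have h2 : D / (D + 1) < 1 := (div_lt_one (by linarith)).2 (by linarith)
    calc κ * (D / (D + 1)) < κ * 1 := mul_lt_mul_of_pos_left h2 hκpos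
      _ = κ := mul_one κ
  have hfin : ‖g (β + d - y)‖ < κ := by
    calc ‖g (β + d - y)‖ ≤ η₁ * Real.exp (K * (β + d - y - 0))
          + P / K * (Real.exp (K * (β + d - y - 0)) - 1) := key
      _ ≤ η₁ * Egr + P * Egr := add_le_add hterm1 hterm2
      _ = D * η₁ := hDeq
      _ < κ := hDκ
  have hgTy : g (β + d - y) = (U d y - U 0 y, W d y - W 0 y) := by
    simp only [hgdef]
    have h : β + d - (β + d - y) = y := by ring
    rw [h]
  rw [hgTy] at hfin
  have hAbnd : |U d y - U 0 y| < κ := by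
    have h := norm_fst_le ((U d y - U 0 y, W d y - W 0 y) : ℝ × ℝ)
    rw [Real.norm_eq_abs] at h
    exact lt_of_le_of_lt h hfin
  have hBbnd : |W d y - W 0 y| < κ := by
    have h := norm_snd_le ((U d y - U 0 y, W d y - W 0 y) : ℝ × ℝ)
    rw [Real.norm_eq_abs] at h
    exact lt_of_le_of_lt h hfin
  -- final algebraic step
  have hUdy : 0 < U d y := hUpos d y
  have hArel : W d y = -S.ε * φ (β + d) θ y * U d y := by rw [hWdef]
  have hwrel : wy = -S.ε * φ β θ y * uy := by
    rw [hwydef, huydef]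
    simp only [hWdef]
    norm_num
  rw [Real.dist_eq, sub_zero, abs_abs]
  have hnum : wy * U d y - W d y * uy
      = S.ε * U d y * uy * (φ (β + d) θ y - φ β θ y) := by
    rw [hArel, hwrel]; ring
  have hAge : uy / 2 ≤ U d y := by
    have h := abs_lt.1 hAbnd
    have := h.1
    linarith
  have hnumb : |wy * U d y - W d y * uy| < κ * (|wy| + uy) := by
    have e1 : |wy * (U d y - uy)| ≤ |wy| * κ := by
      rw [abs_mul]
      exact mul_le_mul_of_nonneg_left hAbnd.le (abs_nonneg _)
    have e2 : |uy * (wy - W d y)| < uy * κ := by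
      rw [abs_mul, abs_of_pos huy, abs_sub_comm]
      exact mul_lt_mul_of_pos_left hBbnd huy
    calc |wy * U d y - W d y * uy|
        = |wy * (U d y - uy) + uy * (wy - W d y)| := by
          rw [show wy * U d y - W d y * uy = wy * (U d y - uy) + uy * (wy - W d y) by ring]
      _ ≤ |wy * (U d y - uy)| + |uy * (wy - W d y)| := abs_add_le _ _
      _ < |wy| * κ + uy * κ := by linarith
      _ = κ * (|wy| + uy) := by ring
  have hmabs : |wy * U d y - W d y * uy|
      = S.ε * U d y * uy * |φ (β + d) θ y - φ β θ y| := by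
    rw [hnum, abs_mul, abs_of_pos (by positivity : (0:ℝ) < S.ε * U d y * uy)]
  rw [hmabs] at hnumb
  have hκb : κ * (2 * (|wy| + uy) + 1) ≤ η * S.ε * uy ^ 2 :=
    (le_div_iff₀ hden).1 hκle2
  have hm0 : 0 ≤ |φ (β + d) θ y - φ β θ y| := abs_nonneg _
  exact final_algebra_aux hε hAge huy hm0 hnumb hκb hκpos
end
end
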